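/- arXiv:2506.20029 — 10 statements merged into one kernel-verified Lean document; each statement's English description precedes it below -/
import Mathlib

section
/- Let G be a finite group and p a prime. If the Sylow p-subgroups of G are TI-subgroups (that is, for every Sylow p-subgroup P and every g ∈ G, the intersection P ∩ P^g equals P or the trivial subgroup), then G does not have a redundant Sylow p-subgroup. -/
/-!
If `P` is redundant, every element `x` of `P` lies in a Sylow subgroup `Q ≠ P`. Since `Q` is
a conjugate of `P` and `P` is TI, `P ⊓ Q` is `P` or trivial, and it cannot be `P` because
`P ≤ Q` forces `P = Q` by maximality. So `x = 1`, i.e. `P = ⊥`; but then `P` is normal, hence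
the only Sylow `p`-subgroup, and no `Q ≠ P` exists at all.
-/

/-- `G` has a redundant Sylow `p`-subgroup if there is a Sylow `p`-subgroup `P` such that
every `p`-element of `G` lies in some Sylow `p`-subgroup different from `P`. -/
def HasRedundantSylow (p : ℕ) (G : Type*) [Group G] : Prop :=
  ∃ P : Sylow p G, ∀ x : G, (∃ k : ℕ, orderOf x = p ^ k) →
    ∃ Q : Sylow p G, Q ≠ P ∧ x ∈ (Q : Subgroup G)

def Subgroup.IsTI {G : Type*} [Group G] (H : Subgroup G) : Prop :=
  ∀ g : G, H ⊓ H.map (MulAut.conj g).toMonoidHom = H ∨ H ⊓ H.map (MulAut.conj g).toMonoidHom = ⊥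

namespace Sylow

variable {p : ℕ} {G : Type*} [Group G]

theorem eq_of_coe_le {P Q : Sylow p G} (h : (P : Subgroup G) ≤ Q) : P = Q :=
  ext (P.3 Q.2 h).symm

theorem inf_eq_bot_of_isTI [Fact p.Prime] [Finite (Sylow p G)] {P Q : Sylow p G}
    (hP : (P : Subgroup G).IsTI) (hPQ : P ≠ Q) : (P : Subgroup G) ⊓ Q = ⊥ := by
  obtain ⟨g, rfl⟩ := MulAction.exists_smul_eq G P Q
  exact (hP g).resolve_left fun h => hPQ (eq_of_coe_le (inf_eq_left.mp h))

theorem subsingleton_of_coe_eq_bot [Fact p.Prime] [Finite (Sylow p G)] (P : Sylow p G)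
    (h : (P : Subgroup G) = ⊥) : Subsingleton (Sylow p G) :=
  have : (P : Subgroup G).Normal := h ▸ Subgroup.normal_bot
  (unique_of_normal P this).instSubsingleton

end Sylow

/-- if the Sylow `p`-subgroups of `G` are TI-subgroups, then `G` does not have
a redundant Sylow `p`-subgroup. -/
theorem no_redundant_of_TI_sylow
    (p : ℕ) [Fact p.Prime] (G : Type*) [Group G] [Finite G]
    (hTI : ∀ (P : Sylow p G) (g : G),
      (P : Subgroup G) ⊓ ((P : Subgroup G).map (MulAut.conj g).toMonoidHom) = (P : Subgroup G) ∨
      (P : Subgroup G) ⊓ ((P : Subgroup G).map (MulAut.conj g).toMonoidHom) = ⊥) :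
    ¬ HasRedundantSylow p G := by
  rintro ⟨P, hP⟩
  have hPbot : (P : Subgroup G) = ⊥ := by
    refine (Subgroup.eq_bot_iff_forall _).2 fun x hx => ?_
    obtain ⟨k, hk⟩ := IsPGroup.iff_orderOf.mp P.2 ⟨x, hx⟩
    obtain ⟨Q, hQP, hxQ⟩ := hP x ⟨k, by rwa [Subgroup.orderOf_mk] at hk⟩
    have hx' : x ∈ (P : Subgroup G) ⊓ Q := ⟨hx, hxQ⟩
    rwa [Sylow.inf_eq_bot_of_isTI (hTI P) hQP.symm] at hx'
  have := Sylow.subsingleton_of_coe_eq_bot P hPbot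
  obtain ⟨Q, hQP, -⟩ := hP 1 ⟨0, by simp⟩
  exact hQP (Subsingleton.elim Q P)
end

section
/- Let G be a finite group, let p be a prime, and let P be a Sylow p-subgroup of G. If the quotient P/O_p(G) is cyclic, where O_p(G) is the largest normal p-subgroup of G, then G does not have a redundant Sylow p-subgroup. -/
open Pointwise


/-- if `P` is a Sylow `p`-subgroup of a finite group `G` with `P/O_p(G)` cyclic,
then `G` has no redundant Sylow `p`-subgroup.  Here `O_p(G)`, the largest normal `p`-subgroup
of `G`, coincides with the normal core of the Sylow `p`-subgroup `P`. -/
theorem no_redundant_of_cyclic_quotient_by_pCore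
    (p : ℕ) [Fact p.Prime] (G : Type*) [Group G] [Finite G] (P : Sylow p G)
    (h : IsCyclic ((P : Subgroup G) ⧸
      ((P : Subgroup G).normalCore.subgroupOf (P : Subgroup G)))) :
    ¬ HasRedundantSylow p G := by
  rintro ⟨P₀, hP₀⟩
  set core := (P : Subgroup G).normalCore with hcore
  have hnorm : core.Normal := Subgroup.normalCore_normal _
  have hcoreP : core ≤ (P : Subgroup G) := Subgroup.normalCore_le _
  -- core is contained in every Sylow subgroup
  have hcore_le : ∀ Q : Sylow p G, core ≤ (Q : Subgroup G) := by
    intro Q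
    obtain ⟨c, hc⟩ := MulAction.exists_smul_eq G P Q
    intro z hz
    rw [← hc]
    show z ∈ ((c • P : Sylow p G) : Subgroup G)
    rw [Sylow.smul_def, Sylow.pointwise_smul_def]
    rw [Subgroup.mem_pointwise_smul_iff_inv_smul_mem]
    exact hcoreP (hnorm.conj_mem' z hz c)
  -- generator of P modulo core
  obtain ⟨zq, hzq⟩ := h.exists_generator
  obtain ⟨g, rfl⟩ := QuotientGroup.mk_surjective zq
  have hPgen : ∀ y : (P : Subgroup G), ∃ n : ℤ, ((g : G) ^ n)⁻¹ * (y : G) ∈ core := by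
    intro y
    obtain ⟨n, hn⟩ := hzq (QuotientGroup.mk y)
    have hn' : (QuotientGroup.mk (g ^ n) :
        (P : Subgroup G) ⧸ core.subgroupOf (P : Subgroup G)) = QuotientGroup.mk y := by
      rw [QuotientGroup.mk_zpow]; exact hn
    rw [QuotientGroup.eq] at hn'
    rw [Subgroup.mem_subgroupOf] at hn'
    refine ⟨n, ?_⟩
    simpa using hn'
  -- transport the generator to P₀ via conjugation
  obtain ⟨c, hc⟩ := MulAction.exists_smul_eq G P P₀
  set g₀ : G := c * (g : G) * c⁻¹ with hg₀def
  have hmem : ∀ y : G, y ∈ (P₀ : Subgroup G) ↔ c⁻¹ * y * c ∈ (P : Subgroup G) := by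
    intro y
    rw [← hc, Sylow.smul_def, Sylow.pointwise_smul_def,
      Subgroup.mem_pointwise_smul_iff_inv_smul_mem]
    simp [MulAut.smul_def, mul_assoc]
  have hg₀ : g₀ ∈ (P₀ : Subgroup G) := by
    rw [hmem]
    simpa [hg₀def, mul_assoc] using g.2
  -- g₀ is a p-element
  have hpelt : ∃ k : ℕ, orderOf g₀ = p ^ k := by
    obtain ⟨k, hk⟩ := P₀.2 ⟨g₀, hg₀⟩
    have : orderOf (⟨g₀, hg₀⟩ : (P₀ : Subgroup G)) ∣ p ^ k :=
      orderOf_dvd_of_pow_eq_one hk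
    rw [Subgroup.orderOf_mk] at this
    obtain ⟨j, _, hj⟩ := (Nat.dvd_prime_pow (Fact.out : p.Prime)).mp this
    exact ⟨j, hj⟩
  obtain ⟨Q, hQne, hQg⟩ := hP₀ g₀ hpelt
  -- any Sylow containing g₀ contains P₀
  have hle : (P₀ : Subgroup G) ≤ (Q : Subgroup G) := by
    intro y hy
    have hy' : c⁻¹ * y * c ∈ (P : Subgroup G) := (hmem y).mp hy
    obtain ⟨n, hn⟩ := hPgen ⟨_, hy'⟩
    have hcoreQ : c * (((g : G) ^ n)⁻¹ * (c⁻¹ * y * c)) * c⁻¹ ∈ core :=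
      hnorm.conj_mem _ hn c
    have h2 : (g₀ ^ n)⁻¹ * y ∈ (Q : Subgroup G) := by
      have : (g₀ ^ n)⁻¹ * y = c * (((g : G) ^ n)⁻¹ * (c⁻¹ * y * c)) * c⁻¹ := by
        rw [hg₀def, conj_zpow]; group
      rw [this]
      exact hcore_le Q hcoreQ
    have := mul_mem (Subgroup.zpow_mem _ hQg n) h2
    simpa using this
  exact hQne (Sylow.ext (P₀.3 Q.2 hle))
end

section
/- Let G be a finite group, p a prime, P a Sylow p-subgroup of G, and x ∈ P. Then |x^G| ≤ |x^G ∩ P| · ν_p(G), with equality if and only if x lies in a unique Sylow p-subgroup of G. In particular, if x ∈ P lies in a unique Sylow p-subgroup of G, then |x^G| ≥ ν_p(G) · |x^P|. -/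
/-!
Double count the pairs `(y, Q)` with `y` a conjugate of `x` and `Q` a Sylow `p`-subgroup
containing `y`. Since the Sylow subgroups are all conjugate, each of them contains exactly
`|x^G ∩ P|` conjugates of `x`, so there are `|x^G ∩ P| ⬝ ν_p(G)` such pairs. Every conjugate
of `x` lies in at least one Sylow subgroup, and in exactly one for all of them as soon as
it does for `x`, which gives the inequality and its equality case. The last claim follows
from `x^P ⊆ x^G ∩ P`.
-/

namespace Nat

theorem card_subtype_eq_one_iff_existsUnique {β : Type*} {p : β → Prop} :
    Nat.card {b // p b} = 1 ↔ ∃! b, p b := by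
  rw [Nat.card_eq_one_iff_exists]
  constructor
  · rintro ⟨⟨b, hb⟩, h⟩
    exact ⟨b, hb, fun c hc => congrArg Subtype.val (h ⟨c, hc⟩)⟩
  · rintro ⟨b, hb, h⟩
    exact ⟨⟨b, hb⟩, fun c => Subtype.ext (h c c.2)⟩

theorem one_le_card_subtype_of_exists {β : Type*} [Finite β] {p : β → Prop} (h : ∃ b, p b) :
    1 ≤ Nat.card {b // p b} :=
  have : Nonempty {b // p b} := h.elim fun b hb => ⟨⟨b, hb⟩⟩
  Nat.card_pos

theorem mul_card_eq_sum_card_of_rel {α β : Type*} [Fintype α] [Finite β] (r : α → β → Prop)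
    {k : ℕ} (hk : ∀ b, Nat.card {a // r a b} = k) :
    k * Nat.card β = ∑ a, Nat.card {b // r a b} := by
  have := Fintype.ofFinite β
  calc k * Nat.card β = Nat.card (Σ b, {a // r a b}) := by
        simp [Nat.card_sigma, hk, Nat.card_eq_fintype_card, mul_comm]
    _ = Nat.card (Σ a, {b // r a b}) :=
        Nat.card_congr (((Equiv.subtypeProdEquivSigmaSubtype fun b a => r a b).symm.trans
          ((Equiv.prodComm β α).subtypeEquiv fun _ => Iff.rfl)).trans
          (Equiv.subtypeProdEquivSigmaSubtype r))
    _ = ∑ a, Nat.card {b // r a b} := Nat.card_sigma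

section Rel

variable {α β : Type*} [Finite α] [Finite β] (r : α → β → Prop) {k : ℕ}

theorem card_le_mul_card_of_rel (hk : ∀ b, Nat.card {a // r a b} = k)
    (hr : ∀ a, ∃ b, r a b) : Nat.card α ≤ k * Nat.card β := by
  have := Fintype.ofFinite α
  rw [mul_card_eq_sum_card_of_rel r hk, Nat.card_eq_fintype_card, Fintype.card_eq_sum_ones]
  exact Finset.sum_le_sum fun a _ => one_le_card_subtype_of_exists (hr a)

theorem card_eq_mul_card_iff_of_rel (hk : ∀ b, Nat.card {a // r a b} = k)
    (hr : ∀ a, ∃ b, r a b) : Nat.card α = k * Nat.card β ↔ ∀ a, ∃! b, r a b := by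
  have := Fintype.ofFinite α
  rw [mul_card_eq_sum_card_of_rel r hk, Nat.card_eq_fintype_card, Fintype.card_eq_sum_ones,
    Finset.sum_eq_sum_iff_of_le fun a _ => one_le_card_subtype_of_exists (hr a)]
  simp [eq_comm, card_subtype_eq_one_iff_existsUnique]

end Rel

end Nat

theorem Subgroup.card_conj_orbit_le {G : Type*} [Group G] [Finite G] {H : Subgroup G} {x : G}
    (hx : x ∈ H) :
    Nat.card {y : G // ∃ g ∈ H, g * x * g⁻¹ = y} ≤ Nat.card {y : G // IsConj x y ∧ y ∈ H} :=
  Nat.card_le_card_of_injective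
    (Subtype.impEmbedding _ _ fun _ ⟨g, hg, hy⟩ =>
      ⟨isConj_iff.2 ⟨g, hy⟩, hy ▸ H.mul_mem (H.mul_mem hg hx) (H.inv_mem hg)⟩)
    (Subtype.impEmbedding _ _ _).injective

namespace Sylow

variable {p : ℕ} {G : Type*} [Group G]

theorem conj_mem_smul_iff {g x : G} {Q : Sylow p G} :
    g * x * g⁻¹ ∈ ((g • Q : Sylow p G) : Subgroup G) ↔ x ∈ (Q : Subgroup G) := by
  rw [coe_subgroup_smul, ← MulAut.conj_apply, ← MulAut.smul_def,
    Subgroup.smul_mem_pointwise_smul_iff]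

theorem exists_mem_of_isConj {x y : G} (P : Sylow p G) (hx : x ∈ (P : Subgroup G))
    (hxy : IsConj x y) : ∃ Q : Sylow p G, y ∈ (Q : Subgroup G) := by
  obtain ⟨g, rfl⟩ := isConj_iff.1 hxy
  exact ⟨g • P, conj_mem_smul_iff.2 hx⟩

theorem existsUnique_mem_iff_of_isConj {x y : G} (hxy : IsConj x y) :
    (∃! Q : Sylow p G, y ∈ (Q : Subgroup G)) ↔ ∃! Q : Sylow p G, x ∈ (Q : Subgroup G) := by
  obtain ⟨g, rfl⟩ := isConj_iff.1 hxy
  exact (MulAction.toPerm g : Equiv.Perm (Sylow p G)).existsUnique_congr_right.symm.trans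
    (existsUnique_congr fun _ => conj_mem_smul_iff)

theorem card_isConj_and_mem_eq [Fact p.Prime] [Finite (Sylow p G)] (x : G) (P Q : Sylow p G) :
    Nat.card {y : G // IsConj x y ∧ y ∈ (Q : Subgroup G)} =
      Nat.card {y : G // IsConj x y ∧ y ∈ (P : Subgroup G)} := by
  obtain ⟨g, rfl⟩ := MulAction.exists_smul_eq G P Q
  refine (Nat.card_congr ((MulAut.conj g).toEquiv.subtypeEquiv fun y => ?_)).symm
  have hconj : IsConj y (g * y * g⁻¹) := isConj_iff.2 ⟨g, rfl⟩
  exact and_congr ⟨fun h => h.trans hconj, fun h => h.trans hconj.symm⟩ conj_mem_smul_iff.symm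

end Sylow

/-- for `x` in a Sylow `p`-subgroup `P` of a finite group `G`,
`|x^G| ≤ |x^G ∩ P| ⬝ ν_p(G)`, with equality iff `x` lies in a unique Sylow `p`-subgroup;
in particular, if `x` lies in a unique Sylow `p`-subgroup then `|x^G| ≥ ν_p(G) ⬝ |x^P|`. -/
theorem conjClass_card_le_and_eq_iff_unique_sylow
    (p : ℕ) [Fact p.Prime] (G : Type*) [Group G] [Finite G]
    (P : Sylow p G) (x : G) (hx : x ∈ (P : Subgroup G)) :
    Nat.card {y : G // IsConj x y} ≤
      Nat.card {y : G // IsConj x y ∧ y ∈ (P : Subgroup G)} * Nat.card (Sylow p G) ∧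
    (Nat.card {y : G // IsConj x y} =
        Nat.card {y : G // IsConj x y ∧ y ∈ (P : Subgroup G)} * Nat.card (Sylow p G) ↔
      ∃! Q : Sylow p G, x ∈ (Q : Subgroup G)) ∧
    ((∃! Q : Sylow p G, x ∈ (Q : Subgroup G)) →
      Nat.card (Sylow p G) * Nat.card {y : G // ∃ g ∈ (P : Subgroup G), g * x * g⁻¹ = y} ≤
        Nat.card {y : G // IsConj x y}) := by
  let r (y : {y : G // IsConj x y}) (Q : Sylow p G) : Prop := (y : G) ∈ (Q : Subgroup G)
  have hk (Q : Sylow p G) :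
      Nat.card {y // r y Q} = Nat.card {y : G // IsConj x y ∧ y ∈ (P : Subgroup G)} :=
    (Nat.card_congr (Equiv.subtypeSubtypeEquivSubtypeInter _ _)).trans
      (Sylow.card_isConj_and_mem_eq x P Q)
  have hr (y : {y : G // IsConj x y}) : ∃ Q, r y Q := Sylow.exists_mem_of_isConj P hx y.2
  have heq_iff : Nat.card {y : G // IsConj x y} =
      Nat.card {y : G // IsConj x y ∧ y ∈ (P : Subgroup G)} * Nat.card (Sylow p G) ↔
      ∃! Q : Sylow p G, x ∈ (Q : Subgroup G) :=
    (Nat.card_eq_mul_card_iff_of_rel r hk hr).trans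
      ⟨fun h => h ⟨x, IsConj.refl x⟩, fun h y => (Sylow.existsUnique_mem_iff_of_isConj y.2).2 h⟩
  refine ⟨Nat.card_le_mul_card_of_rel r hk hr, heq_iff, fun h => ?_⟩
  rw [heq_iff.2 h, mul_comm]
  exact Nat.mul_le_mul_right _ (Subgroup.card_conj_orbit_le hx)
end

section
/- Let p be a prime and let G be a finite group such that G = PN, where P is a Sylow p-subgroup of G, N is a normal subgroup of G, and gcd(|P|, |N|) = 1. If x ∈ P, then |x^G| ≤ ν_p(G) · |x^P|, with equality if and only if P is the unique Sylow p-subgroup of G containing x. -/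
open Subgroup Pointwise

private lemma sylow_mem_smul_iff' {p : ℕ} {G : Type*} [Group G] {g y : G} {Q : Sylow p G} :
    y ∈ (↑(g • Q) : Subgroup G) ↔ g⁻¹ * y * g ∈ (Q : Subgroup G) := by
  rw [Sylow.coe_subgroup_smul, Subgroup.mem_pointwise_smul_iff_inv_smul_mem]
  simp [MulAut.smul_def]

private lemma fusion_aux {G : Type*} [Group G] {K N : Subgroup G} [hN : N.Normal]
    (hdisj : K ⊓ N = ⊥) {z n : G} (hz : z ∈ K) (hn : n ∈ N) (h : n * z * n⁻¹ ∈ K) :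
    n * z * n⁻¹ = z := by
  have h1 : n * z * n⁻¹ * z⁻¹ ∈ K := mul_mem h (inv_mem hz)
  have h2 : n * z * n⁻¹ * z⁻¹ ∈ N := by
    have h3 : z * n⁻¹ * z⁻¹ ∈ N := hN.conj_mem n⁻¹ (inv_mem hn) z
    have := mul_mem hn h3
    convert this using 1
    group
  have hmem : n * z * n⁻¹ * z⁻¹ ∈ K ⊓ N := ⟨h1, h2⟩
  rw [hdisj, Subgroup.mem_bot] at hmem
  have := mul_inv_eq_one.mp hmem
  exact this

/-- if `G = PN` with `P` a Sylow `p`-subgroup, `N ⊴ G` and `gcd(|P|,|N|) = 1`,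
then for `x ∈ P` we have `|x^G| ≤ ν_p(G) ⬝ |x^P|`, with equality iff `P` is the unique
Sylow `p`-subgroup containing `x`. -/
theorem conjClass_card_le_in_pNilpotent
    (p : ℕ) [Fact p.Prime] (G : Type*) [Group G] [Finite G]
    (P : Sylow p G) (N : Subgroup G) [N.Normal]
    (hGPN : (P : Subgroup G) ⊔ N = ⊤)
    (hcop : Nat.Coprime (Nat.card (P : Subgroup G)) (Nat.card N))
    (x : G) (hx : x ∈ (P : Subgroup G)) :
    Nat.card {y : G // IsConj x y} ≤
      Nat.card (Sylow p G) * Nat.card {y : G // ∃ g ∈ (P : Subgroup G), g * x * g⁻¹ = y} ∧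
    (Nat.card {y : G // IsConj x y} =
        Nat.card (Sylow p G) * Nat.card {y : G // ∃ g ∈ (P : Subgroup G), g * x * g⁻¹ = y} ↔
      ∀ Q : Sylow p G, x ∈ (Q : Subgroup G) → Q = P) := by
  classical
  set K : Subgroup G := (P : Subgroup G) with hK
  have hdisj : K ⊓ N = ⊥ := inf_eq_bot_of_coprime hcop
  -- decomposition G = N * P
  have hdecomp : ∀ g : G, ∃ n ∈ N, ∃ a ∈ K, n * a = g := by
    intro g
    have htop : N ⊔ K = ⊤ := by rw [sup_comm]; exact hGPN
    have hg : g ∈ ((N ⊔ K : Subgroup G) : Set G) := by rw [htop]; trivial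
    rw [Subgroup.normal_mul] at hg
    exact hg
  -- every Sylow is an N-conjugate of P
  have hsyl : ∀ Q : Sylow p G, ∃ n : G, n ∈ N ∧ n • P = Q := by
    intro Q
    obtain ⟨g, hg⟩ := MulAction.exists_smul_eq G P Q
    obtain ⟨n, hn, a, ha, rfl⟩ := hdecomp g
    refine ⟨n, hn, ?_⟩
    have haP : a • P = P := Sylow.smul_eq_iff_mem_normalizer.mpr (Subgroup.le_normalizer ha)
    rw [mul_smul, haP] at hg
    exact hg
  choose nn hnnN hnnP using hsyl
  -- fusion
  have fus : ∀ z n : G, z ∈ K → n ∈ N → n * z * n⁻¹ ∈ K → n * z * n⁻¹ = z :=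
    fun z n hz hn h => fusion_aux hdisj hz hn h
  -- independence of the representative
  have keyC : ∀ m n : G, m ∈ N → n ∈ N → m • P = n • P → ∀ z ∈ K,
      m * z * m⁻¹ = n * z * n⁻¹ := by
    intro m n hm hn hmn z hz
    have hc : (n⁻¹ * m) • P = P := by
      rw [mul_smul, hmn, ← mul_smul, inv_mul_cancel, one_smul]
    have hcnorm : (n⁻¹ * m) ∈ Subgroup.normalizer (K : Set G) := Sylow.smul_eq_iff_mem_normalizer.mp hc
    have hcz : (n⁻¹ * m) * z * (n⁻¹ * m)⁻¹ ∈ K :=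
      (Subgroup.mem_normalizer_iff.mp hcnorm z).mp hz
    have hcz' : (n⁻¹ * m) * z * (n⁻¹ * m)⁻¹ = z :=
      fus z (n⁻¹ * m) hz (mul_mem (inv_mem hn) hm) hcz
    calc m * z * m⁻¹ = n * ((n⁻¹ * m) * z * (n⁻¹ * m)⁻¹) * n⁻¹ := by group
      _ = n * z * n⁻¹ := by rw [hcz']
  -- the comparison map
  set B := {y : G // ∃ g ∈ K, g * x * g⁻¹ = y} with hB
  have hBK : ∀ z : B, (z : G) ∈ K := by
    rintro ⟨z, a, ha, rfl⟩
    exact mul_mem (mul_mem ha hx) (inv_mem ha)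
  let F : Sylow p G × B → {y : G // IsConj x y} := fun qz =>
    ⟨nn qz.1 * (qz.2 : G) * (nn qz.1)⁻¹, by
      obtain ⟨Q, z, a, ha, hz⟩ := qz
      simp only at *
      refine isConj_iff.mpr ⟨nn Q * a, ?_⟩
      rw [← hz]; group⟩
  -- surjectivity
  have hsurj : Function.Surjective F := by
    rintro ⟨y, hy⟩
    obtain ⟨g, hg⟩ := isConj_iff.mp hy
    obtain ⟨n, hn, a, ha, rfl⟩ := hdecomp g
    have hzB : ∃ g ∈ K, g * x * g⁻¹ = a * x * a⁻¹ := ⟨a, ha, rfl⟩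
    refine ⟨⟨n • P, ⟨a * x * a⁻¹, hzB⟩⟩, ?_⟩
    apply Subtype.ext
    show nn (n • P) * (a * x * a⁻¹) * (nn (n • P))⁻¹ = y
    have hz : a * x * a⁻¹ ∈ K := mul_mem (mul_mem ha hx) (inv_mem ha)
    rw [keyC (nn (n • P)) n (hnnN _) hn (hnnP _) _ hz, ← hg]
    group
  -- trivial orbit element
  have hxB : ∃ g ∈ K, g * x * g⁻¹ = x := ⟨1, one_mem K, by group⟩
  -- injectivity ↔ uniqueness
  have inj_of_uniq : (∀ Q : Sylow p G, x ∈ (Q : Subgroup G) → Q = P) →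
      Function.Injective F := by
    intro huniq
    rintro ⟨Q, z⟩ ⟨Q', z'⟩ hFF
    have hzK := hBK z
    have hz'K := hBK z'
    have heq : nn Q * (z : G) * (nn Q)⁻¹ = nn Q' * (z' : G) * (nn Q')⁻¹ :=
      congrArg Subtype.val hFF
    set m := nn Q with hm
    set m' := nn Q' with hm'
    have hc : (m'⁻¹ * m) * (z : G) * (m'⁻¹ * m)⁻¹ = (z' : G) := by
      calc (m'⁻¹ * m) * (z : G) * (m'⁻¹ * m)⁻¹
          = m'⁻¹ * (m * (z : G) * m⁻¹) * m' := by group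
        _ = m'⁻¹ * (m' * (z' : G) * m'⁻¹) * m' := by rw [heq]
        _ = (z' : G) := by group
    have hcz : (m'⁻¹ * m) * (z : G) * (m'⁻¹ * m)⁻¹ = (z : G) := by
      refine fus _ _ hzK (mul_mem (inv_mem (hnnN Q')) (hnnN Q)) ?_
      rw [hc]; exact hz'K
    have hzz' : (z : G) = (z' : G) := by rw [← hc, hcz]
    obtain ⟨a, ha, haz⟩ := z.2
    set c := m'⁻¹ * m with hcdef
    have hgx : (a⁻¹ * c * a) * x * (a⁻¹ * c * a)⁻¹ = x := by
      have : c * (a * x * a⁻¹) * c⁻¹ = a * x * a⁻¹ := by rw [haz]; exact hcz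
      calc (a⁻¹ * c * a) * x * (a⁻¹ * c * a)⁻¹
          = a⁻¹ * (c * (a * x * a⁻¹) * c⁻¹) * a := by group
        _ = a⁻¹ * (a * x * a⁻¹) * a := by rw [this]
        _ = x := by group
    have hxmem : x ∈ ((a⁻¹ * c * a) • P : Sylow p G).1 := by
      rw [sylow_mem_smul_iff']
      have : (a⁻¹ * c * a)⁻¹ * x * (a⁻¹ * c * a) = x := by
        conv_lhs => rw [← hgx]
        group
      rw [this]; exact hx
    have hgP : (a⁻¹ * c * a) • P = P := huniq _ hxmem
    have hgn : (a⁻¹ * c * a) ∈ Subgroup.normalizer (K : Set G) := Sylow.smul_eq_iff_mem_normalizer.mp hgP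
    have hcn : c ∈ Subgroup.normalizer (K : Set G) := by
      have : c = a * (a⁻¹ * c * a) * a⁻¹ := by group
      rw [this]
      exact mul_mem (mul_mem (Subgroup.le_normalizer ha) hgn)
        (inv_mem (Subgroup.le_normalizer ha))
    have hcP : c • P = P := Sylow.smul_eq_iff_mem_normalizer.mpr hcn
    have hQQ' : Q = Q' := by
      rw [← hnnP Q, ← hnnP Q', ← hm, ← hm']
      have : m = m' * c := by rw [hcdef]; group
      rw [this, mul_smul, hcP]
    exact Prod.ext hQQ' (Subtype.ext hzz')
  have uniq_of_inj : Function.Injective F →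
      (∀ Q : Sylow p G, x ∈ (Q : Subgroup G) → Q = P) := by
    intro hinj Q hxQ
    have hfix : ∀ R : Sylow p G, x ∈ (R : Subgroup G) → nn R * x * (nn R)⁻¹ = x := by
      intro R hxR
      have h1 : (nn R)⁻¹ * x * nn R ∈ K := by
        have hmem : x ∈ ((nn R • P : Sylow p G) : Subgroup G) := by
          rw [hnnP R]; exact hxR
        exact sylow_mem_smul_iff'.mp hmem
      have h2 : (nn R)⁻¹ * x * ((nn R)⁻¹)⁻¹ = x := by
        refine fus x (nn R)⁻¹ hx (inv_mem (hnnN R)) ?_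
        rw [inv_inv]; exact h1
      rw [inv_inv] at h2
      calc nn R * x * (nn R)⁻¹
          = nn R * ((nn R)⁻¹ * x * nn R) * (nn R)⁻¹ := by rw [h2]
        _ = x := by group
    have hFP : F (Q, ⟨x, hxB⟩) = F (P, ⟨x, hxB⟩) := by
      apply Subtype.ext
      show nn Q * x * (nn Q)⁻¹ = nn P * x * (nn P)⁻¹
      rw [hfix Q hxQ, hfix P hx]
    exact congrArg Prod.fst (hinj hFP)
  -- cardinalities
  haveI : Fintype (Sylow p G × B) := Fintype.ofFinite _
  haveI : Fintype {y : G // IsConj x y} := Fintype.ofFinite _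
  have hle : Nat.card {y : G // IsConj x y} ≤ Nat.card (Sylow p G) * Nat.card B := by
    have := Nat.card_le_card_of_surjective F hsurj
    rwa [Nat.card_prod] at this
  refine ⟨hle, ?_, ?_⟩
  · intro heq
    apply uniq_of_inj
    have hcards : Fintype.card (Sylow p G × B) = Fintype.card {y : G // IsConj x y} := by
      rw [← Nat.card_eq_fintype_card, ← Nat.card_eq_fintype_card, Nat.card_prod, ← heq]
    exact ((Fintype.bijective_iff_surjective_and_card F).mpr ⟨hsurj, hcards⟩).1
  · intro huniq
    have hbij : Function.Bijective F := ⟨inj_of_uniq huniq, hsurj⟩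
    have := Nat.card_eq_of_bijective F hbij
    rw [Nat.card_prod] at this
    exact this.symm
end

section
/- Let p be a prime and let G be a finite group such that G = PN, where P is a nontrivial Sylow p-subgroup of G, N is a normal subgroup of G, gcd(|P|, |N|) = 1, and C_N(P) = 1. Then G has a redundant Sylow p-subgroup if and only if C_N(x) is nontrivial for every nontrivial p-element x of G. -/
open Subgroup Pointwise

section Aux

variable {p : ℕ} [Fact p.Prime] {G : Type*} [Group G]

set_option linter.unusedSectionVars false in
lemma mem_smul_sylow_iff {g x : G} (Q : Sylow p G) :
    x ∈ ((g • Q : Sylow p G) : Subgroup G) ↔ g⁻¹ * x * g ∈ (Q : Subgroup G) := by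
  rw [Sylow.coe_subgroup_smul, Subgroup.mem_pointwise_smul_iff_inv_smul_mem]
  simp [MulAut.smul_def]

end Aux


/-- if `G = PN` with `P` a nontrivial Sylow `p`-subgroup, `N ⊴ G`,
`gcd(|P|,|N|) = 1` and `C_N(P) = 1`, then `G` has a redundant Sylow `p`-subgroup if and
only if `C_N(x) > 1` for every nontrivial `p`-element `x` of `G`. -/
theorem redundant_iff_centralizers_nontrivial
    (p : ℕ) [Fact p.Prime] (G : Type*) [Group G] [Finite G]
    (P : Sylow p G) (hPnt : (P : Subgroup G) ≠ ⊥)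
    (N : Subgroup G) [N.Normal]
    (hGPN : (P : Subgroup G) ⊔ N = ⊤)
    (hcop : Nat.Coprime (Nat.card (P : Subgroup G)) (Nat.card N))
    (hCNP : N ⊓ Subgroup.centralizer ((P : Subgroup G) : Set G) = ⊥) :
    HasRedundantSylow p G ↔
      ∀ x : G, x ≠ 1 → (∃ k : ℕ, orderOf x = p ^ k) →
        N ⊓ Subgroup.centralizer {x} ≠ ⊥ := by
  classical
  have hN : N.Normal := inferInstance
  -- cardinality of every Sylow equals that of P
  have hcard : ∀ Q : Sylow p G,
      Nat.card (Q : Subgroup G) = Nat.card (P : Subgroup G) := fun Q => by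
    rw [Sylow.card_eq_multiplicity, Sylow.card_eq_multiplicity]
  have hQN : ∀ Q : Sylow p G, (Q : Subgroup G) ⊓ N = ⊥ := fun Q =>
    inf_eq_bot_of_coprime (by rw [hcard]; exact hcop)
  -- key commutator trick
  have key : ∀ (Q : Sylow p G) (n : G), n ∈ N → ∀ x : G, x ∈ (Q : Subgroup G) →
      x ∈ ((n • Q : Sylow p G) : Subgroup G) → n * x = x * n := by
    intro Q n hn x hxQ hxnQ
    rw [mem_smul_sylow_iff] at hxnQ
    have h1 : x⁻¹ * (n⁻¹ * x * n) ∈ (Q : Subgroup G) :=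
      mul_mem (inv_mem hxQ) hxnQ
    have h2 : x⁻¹ * (n⁻¹ * x * n) ∈ N := by
      have hc : x⁻¹ * n⁻¹ * x⁻¹⁻¹ ∈ N := hN.conj_mem n⁻¹ (inv_mem hn) x⁻¹
      rw [inv_inv] at hc
      have := mul_mem hc hn
      convert this using 1
      group
    have hb : x⁻¹ * (n⁻¹ * x * n) ∈ (Q : Subgroup G) ⊓ N := ⟨h1, h2⟩
    rw [hQN Q] at hb
    have : x⁻¹ * (n⁻¹ * x * n) = 1 := hb
    have hx : n⁻¹ * x * n = x := by
      have := congrArg (fun y => x * y) this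
      simpa [mul_assoc] using this
    calc n * x = n * (n⁻¹ * x * n) * n⁻¹ * n := by rw [hx]; group
    _ = x * n := by group
  -- centralizing all of a Sylow forces triviality
  have hCNQ : ∀ (Q : Sylow p G) (n : G), n ∈ N →
      (∀ x ∈ (Q : Subgroup G), n * x = x * n) → n = 1 := by
    intro Q n hn hcomm
    obtain ⟨g, rfl⟩ := MulAction.exists_smul_eq G P Q
    have hm : g⁻¹ * n * g ∈ N ⊓ Subgroup.centralizer ((P : Subgroup G) : Set G) := by
      refine Subgroup.mem_inf.mpr ⟨?_, ?_⟩
      · simpa using hN.conj_mem n hn g⁻¹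
      · rw [Subgroup.mem_centralizer_iff]
        intro u hu
        have hu' : g * u * g⁻¹ ∈ ((g • P : Sylow p G) : Subgroup G) := by
          rw [mem_smul_sylow_iff]
          simp [mul_assoc]; exact hu
        have := hcomm _ hu'
        -- n * (g u g⁻¹) = (g u g⁻¹) * n  ⇒  u * (g⁻¹ n g) = (g⁻¹ n g) * u
        have h2 := congrArg (fun y => g⁻¹ * y * g) this
        simpa [mul_assoc] using h2.symm
    rw [hCNP] at hm
    have : g⁻¹ * n * g = 1 := hm
    have := congrArg (fun y => g * y * g⁻¹) this
    simpa [mul_assoc] using this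
  have smul_ne : ∀ (Q : Sylow p G) (n : G), n ∈ N → n ≠ 1 →
      (n • Q : Sylow p G) ≠ Q := by
    intro Q n hn hn1 h
    refine hn1 (hCNQ Q n hn ?_)
    intro x hx
    exact key Q n hn x hx (by rw [h]; exact hx)
  -- every p-element lies in some Sylow
  have exists_sylow_mem : ∀ x : G, (∃ k : ℕ, orderOf x = p ^ k) →
      ∃ Q : Sylow p G, x ∈ (Q : Subgroup G) := by
    rintro x ⟨k, hk⟩
    have hpg : IsPGroup p (Subgroup.zpowers x) :=
      IsPGroup.of_card (by rw [Nat.card_zpowers, hk])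
    obtain ⟨Q, hQ⟩ := hpg.exists_le_sylow
    exact ⟨Q, hQ (Subgroup.mem_zpowers x)⟩
  -- N ⊔ R = ⊤ for every Sylow R
  have hsupR : ∀ R : Sylow p G, N ⊔ (R : Subgroup G) = ⊤ := by
    intro R
    obtain ⟨g, rfl⟩ := MulAction.exists_smul_eq G P R
    have : MulAut.conj g • ((P : Subgroup G) ⊔ N) = (⊤ : Subgroup G) := by
      rw [hGPN]
      ext y
      simp [Subgroup.mem_pointwise_smul_iff_inv_smul_mem]
    rw [Subgroup.smul_sup, Subgroup.Normal.conj_smul_eq_self g N] at this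
    rw [Sylow.coe_subgroup_smul, sup_comm]
    exact this
  -- every Sylow is an N-translate of any other
  have syl_param : ∀ Q R : Sylow p G, ∃ n ∈ N, (n • R : Sylow p G) = Q := by
    intro Q R
    obtain ⟨g, hg⟩ := MulAction.exists_smul_eq G R Q
    have hgmem : g ∈ (↑N * ↑(R : Subgroup G) : Set G) := by
      rw [← Subgroup.normal_mul, hsupR R]
      trivial
    obtain ⟨n, hn, u, hu, rfl⟩ := hgmem
    refine ⟨n, hn, ?_⟩
    have hu' : (u • R : Sylow p G) = R :=
      Sylow.smul_eq_iff_mem_normalizer.mpr (Subgroup.le_normalizer hu)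
    rw [← hg, mul_smul, hu']
  -- uniqueness of the Sylow containing x when C_N(x) = ⊥
  have uniq : ∀ x : G, (N ⊓ Subgroup.centralizer {x} = ⊥) →
      ∀ Q R : Sylow p G, x ∈ (Q : Subgroup G) → x ∈ (R : Subgroup G) → Q = R := by
    intro x hx Q R hQ hR
    obtain ⟨n, hn, rfl⟩ := syl_param Q R
    have hc := key R n hn x hR hQ
    have : n ∈ N ⊓ Subgroup.centralizer {x} :=
      Subgroup.mem_inf.mpr ⟨hn, Subgroup.mem_centralizer_singleton_iff.mpr hc⟩
    rw [hx] at this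
    have : n = 1 := this
    rw [this, one_smul]
  constructor
  · rintro ⟨R, hR⟩ x hx1 hpx
    intro hbot
    obtain ⟨Q, hxQ⟩ := exists_sylow_mem x hpx
    obtain ⟨n, hn, rfl⟩ := syl_param R Q
    set x' := n * x * n⁻¹ with hx'def
    have hx'R : x' ∈ ((n • Q : Sylow p G) : Subgroup G) := by
      rw [mem_smul_sylow_iff]
      simpa [hx'def, mul_assoc] using hxQ
    obtain ⟨k, hk⟩ := hpx
    have horder : orderOf x' = p ^ k := by
      rw [hx'def, show n * x * n⁻¹ = (MulAut.conj n) x from rfl,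
        (MulAut.conj n).orderOf_eq x, hk]
    have hx'1 : x' ≠ 1 := by
      intro h
      apply hx1
      have := congrArg (fun y => n⁻¹ * y * n) h
      simpa [hx'def, mul_assoc] using this
    have hx'bot : N ⊓ Subgroup.centralizer {x'} = ⊥ := by
      rw [eq_bot_iff]
      intro c hcmem
      obtain ⟨hcN, hcC⟩ := Subgroup.mem_inf.mp hcmem
      rw [Subgroup.mem_centralizer_singleton_iff] at hcC
      have hm : n⁻¹ * c * n ∈ N ⊓ Subgroup.centralizer {x} := by
        refine Subgroup.mem_inf.mpr ⟨by simpa using hN.conj_mem c hcN n⁻¹, ?_⟩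
        rw [Subgroup.mem_centralizer_singleton_iff]
        have := congrArg (fun y => n⁻¹ * y * n) hcC
        simpa [hx'def, mul_assoc] using this
      rw [hbot] at hm
      have : n⁻¹ * c * n = 1 := hm
      have := congrArg (fun y => n * y * n⁻¹) this
      simpa [mul_assoc] using this
    obtain ⟨S, hSne, hx'S⟩ := hR x' ⟨k, horder⟩
    exact hSne (uniq x' hx'bot S (n • Q) hx'S hx'R)
  · intro h
    refine ⟨P, ?_⟩
    intro x hpx
    by_cases hx1 : x = 1
    · have hNne : N ≠ ⊥ := by
        intro hNbot
        obtain ⟨⟨y, hy⟩, hy1⟩ := Subgroup.ne_bot_iff_exists_ne_one.mp hPnt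
        have hy1' : y ≠ 1 := by
          simpa [Subtype.ext_iff] using hy1
        have hyp : ∃ k : ℕ, orderOf y = p ^ k := by
          obtain ⟨k, hk⟩ := (IsPGroup.iff_orderOf.mp P.isPGroup') ⟨y, hy⟩
          exact ⟨k, by rwa [Subgroup.orderOf_mk] at hk⟩
        exact h y hy1' hyp (le_bot_iff.mp (hNbot ▸ inf_le_left))
      obtain ⟨⟨n, hn⟩, hn1⟩ := Subgroup.ne_bot_iff_exists_ne_one.mp hNne
      have hn1' : n ≠ 1 := by simpa [Subtype.ext_iff] using hn1
      exact ⟨n • P, smul_ne P n hn hn1', hx1 ▸ one_mem _⟩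
    · obtain ⟨Q, hxQ⟩ := exists_sylow_mem x hpx
      have hcne := h x hx1 hpx
      obtain ⟨⟨c, hc⟩, hc1⟩ := Subgroup.ne_bot_iff_exists_ne_one.mp hcne
      have hc1' : c ≠ 1 := by simpa [Subtype.ext_iff] using hc1
      obtain ⟨hcN, hcC⟩ := Subgroup.mem_inf.mp hc
      rw [Subgroup.mem_centralizer_singleton_iff] at hcC
      have hx_cQ : x ∈ ((c • Q : Sylow p G) : Subgroup G) := by
        rw [mem_smul_sylow_iff]
        have : c⁻¹ * x * c = x := by
          have := congrArg (fun y => c⁻¹ * y) hcC.symm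
          simpa [mul_assoc] using this
        rwa [this]
      have hne : (c • Q : Sylow p G) ≠ Q := smul_ne Q c hcN hc1'
      by_cases hQP : Q = P
      · exact ⟨c • Q, by rw [hQP] at hne ⊢; exact hne, hx_cQ⟩
      · exact ⟨Q, hQP, hxQ⟩
end

section
/- Let p be a prime. If P is a finite non-cyclic p-group of exponent p, then there exists a finite solvable group G whose Sylow p-subgroups are isomorphic to P and which has a redundant Sylow p-subgroup. -/
open SemidirectProduct Pointwise

/-- The coordinate-translation action of `P` on `P → Multiplicative (ZMod q)`. -/
def coordAct (q : ℕ) (P : Type) [Group P] :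
    P →* MulAut (P → Multiplicative (ZMod q)) where
  toFun y := MulEquiv.arrowCongr (Equiv.mulLeft y) (MulEquiv.refl (Multiplicative (ZMod q)))
  map_one' := by
    ext w a
    simp
    rfl
  map_mul' y z := by
    ext w a
    show w ((Equiv.mulLeft (y * z)).symm a) =
      w ((Equiv.mulLeft z).symm ((Equiv.mulLeft y).symm a))
    simp only [Equiv.mulLeft_symm, Equiv.coe_mulLeft, mul_inv_rev, mul_assoc]

lemma coordAct_apply (q : ℕ) (P : Type) [Group P] (y : P)
    (w : P → Multiplicative (ZMod q)) (a : P) :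
    coordAct q P y w a = w (y⁻¹ * a) := by
  show w ((Equiv.mulLeft y).symm a) = w (y⁻¹ * a)
  simp

/-- The ambient group: semidirect product of functions `P → ZMod q` with `P`. -/
abbrev AmbientG (q : ℕ) (P : Type) [Group P] : Type :=
  (P → Multiplicative (ZMod q)) ⋊[coordAct q P] P

theorem aux_exists_redundant (p : ℕ) [Fact p.Prime] (P : Type) [Group P] [Finite P]
    (hP : IsPGroup p P) (hnc : ¬ IsCyclic P) :
    ∃ (G : Type) (_ : Group G) (_ : Finite G),
      IsSolvable G ∧
      (∀ Q : Sylow p G, Nonempty ((Q : Subgroup G) ≃* P)) ∧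
      HasRedundantSylow p G := by
  classical
  obtain ⟨q, hqle, hq⟩ := Nat.exists_infinite_primes (p + 2)
  have hqp : q ≠ p := by omega
  haveI : Fact q.Prime := ⟨hq⟩
  haveI : NeZero q := ⟨hq.pos.ne'⟩
  haveI : Finite (AmbientG q P) := by
    refine Finite.of_injective
      (fun g : AmbientG q P => (g.left, g.right)) ?_
    intro a b h
    exact SemidirectProduct.ext (congrArg Prod.fst h) (congrArg Prod.snd h)
  -- exponent q of the normal part
  have hVq : ∀ w : P → Multiplicative (ZMod q), w ^ q = 1 := by
    intro w
    funext a
    show w a ^ q = 1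
    apply Multiplicative.toAdd.injective
    rw [toAdd_pow, toAdd_one, nsmul_eq_mul, ZMod.natCast_self, zero_mul]
  have e1 : P ≃* ((inr : P →* AmbientG q P).range) := MonoidHom.ofInjective inr_injective
  have hS0p : IsPGroup p ((inr : P →* AmbientG q P).range) := hP.of_equiv e1
  have hmem_range : ∀ (n : P → Multiplicative (ZMod q)) (g : P),
      (inl n * inr g : AmbientG q P) ∈ (inr : P →* AmbientG q P).range → n = 1 := by
    intro n g hmem
    obtain ⟨u, hu⟩ := hmem
    have h3 : (inl n : AmbientG q P) = inr u * (inr g)⁻¹ :=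
      eq_mul_inv_iff_mul_eq.mpr hu.symm
    rw [← map_inv, ← map_mul] at h3
    simpa using congrArg SemidirectProduct.left h3
  have hmax : ∀ {Q : Subgroup (AmbientG q P)}, IsPGroup p Q →
      (inr : P →* AmbientG q P).range ≤ Q → Q = (inr : P →* AmbientG q P).range := by
    intro Q hQ hle
    refine le_antisymm ?_ hle
    intro g hg
    have h1 : (inr g.right : AmbientG q P) ∈ Q := hle ⟨g.right, rfl⟩
    have h2 : (inl g.left : AmbientG q P) ∈ Q := by
      have : (inl g.left : AmbientG q P) = g * (inr g.right)⁻¹ :=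
        eq_mul_inv_iff_mul_eq.mpr (inl_left_mul_inr_right g)
      rw [this]
      exact Q.mul_mem hg (Q.inv_mem h1)
    obtain ⟨k, hk⟩ := hQ ⟨inl g.left, h2⟩
    have hk' : (inl g.left : AmbientG q P) ^ p ^ k = 1 := by
      have := congrArg Subtype.val hk
      simpa using this
    have hpow : g.left ^ p ^ k = 1 := by
      apply inl_injective (φ := coordAct q P)
      rw [map_pow, map_one]
      exact hk'
    have hdvd1 : orderOf g.left ∣ p ^ k := orderOf_dvd_of_pow_eq_one hpow
    have hdvd2 : orderOf g.left ∣ q := orderOf_dvd_of_pow_eq_one (hVq g.left)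
    have hcop : Nat.Coprime q (p ^ k) :=
      Nat.Coprime.pow_right k ((Nat.coprime_primes hq Fact.out).mpr hqp)
    have hord : orderOf g.left = 1 := Nat.eq_one_of_dvd_coprimes hcop hdvd2 hdvd1
    have hleft : g.left = 1 := orderOf_eq_one_iff.mp hord
    refine ⟨g.right, ?_⟩
    conv_rhs => rw [← inl_left_mul_inr_right g]
    rw [hleft, map_one, one_mul]
  let S : Sylow p (AmbientG q P) :=
    ⟨(inr : P →* AmbientG q P).range, hS0p, fun hQ hle => hmax hQ hle⟩
  haveI : Finite (Sylow p (AmbientG q P)) :=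
    Finite.of_injective (fun (Q : Sylow p (AmbientG q P)) => (Q : Subgroup (AmbientG q P)))
      fun _ _ h => Sylow.ext h
  -- solvability
  haveI : Group.IsNilpotent P := hP.isNilpotent
  have hsolv : IsSolvable (AmbientG q P) :=
    solvable_of_ker_le_range inl rightHom (le_of_eq range_inl_eq_ker_rightHom.symm)
  -- all Sylows are isomorphic to P
  have hiso : ∀ Q : Sylow p (AmbientG q P), Nonempty ((Q : Subgroup (AmbientG q P)) ≃* P) := by
    intro Q
    obtain ⟨b, hb⟩ := MulAction.exists_smul_eq (AmbientG q P) S Q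
    have hQeq : (Q : Subgroup (AmbientG q P)) =
        ((inr : P →* AmbientG q P).range).map (MulAut.conj b).toMonoidHom := by
      rw [← hb, Sylow.coe_subgroup_smul, Subgroup.pointwise_smul_def]
      rfl
    rw [hQeq]
    exact ⟨((e1.trans (MulEquiv.subgroupMap (MulAut.conj b) _))).symm⟩
  refine ⟨AmbientG q P, inferInstance, inferInstance, hsolv, hiso, S, ?_⟩
  intro x hx
  obtain ⟨k, hk⟩ := hx
  have h1 : x ^ p ^ k = 1 := by rw [← hk]; exact pow_orderOf_eq_one x
  have hxp : IsPGroup p (Subgroup.zpowers x) := by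
    rintro ⟨g, n, rfl⟩
    refine ⟨k, Subtype.ext ?_⟩
    show ((x ^ n : AmbientG q P) ^ p ^ k) = 1
    rw [← zpow_natCast (x ^ n), ← zpow_mul, mul_comm, zpow_mul, zpow_natCast, h1, one_zpow]
  obtain ⟨Q₁, hQ₁⟩ := hxp.exists_le_sylow
  by_cases hQS : Q₁ = S
  · have hxS : x ∈ (inr : P →* AmbientG q P).range := by
      have : x ∈ (S : Subgroup (AmbientG q P)) := by
        rw [← hQS]; exact hQ₁ (Subgroup.mem_zpowers x)
      exact this
    obtain ⟨y, rfl⟩ := hxS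
    obtain ⟨z, hz⟩ : ∃ z : P, z ∉ Subgroup.zpowers y := by
      by_contra h
      push_neg at h
      exact hnc ⟨⟨y, h⟩⟩
    set w : P → Multiplicative (ZMod q) :=
      fun a => if a ∈ Subgroup.zpowers y then Multiplicative.ofAdd (1 : ZMod q) else 1
      with hwdef
    have hmemiff : ∀ a : P, (y⁻¹ * a ∈ Subgroup.zpowers y) ↔ a ∈ Subgroup.zpowers y :=
      fun a => Subgroup.mul_mem_cancel_left _ (Subgroup.inv_mem _ (Subgroup.mem_zpowers y))
    have hw_fix : coordAct q P y w = w := by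
      funext a
      rw [coordAct_apply]
      simp only [hwdef, hmemiff]
    have hw_move : coordAct q P z w ≠ w := by
      intro h
      have h1' := congrFun h 1
      rw [coordAct_apply] at h1'
      have hz' : z⁻¹ * 1 ∉ Subgroup.zpowers y := by
        rw [mul_one]
        exact fun hh => hz ((Subgroup.inv_mem_iff _).mp hh)
      simp only [hwdef, if_neg hz', if_pos (Subgroup.one_mem _)] at h1'
      haveI : Fact (1 < q) := ⟨hq.one_lt⟩
      have hcontr : (0 : ZMod q) = 1 := by
        have := congrArg Multiplicative.toAdd h1'
        simpa using this
      exact zero_ne_one hcontr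
    have hcomm : ∀ (u : P) (v : P → Multiplicative (ZMod q)),
        (inr u * inl v : AmbientG q P) = inl ((coordAct q P) u v) * inr u := by
      intro u v
      rw [inl_aut, mul_assoc, ← map_mul, inv_mul_cancel, map_one, mul_one]
    set b : AmbientG q P := inl w with hbdef
    refine ⟨b • S, ?_, ?_⟩
    · intro hE
      have hbn : b ∈ Subgroup.normalizer ((S : Subgroup (AmbientG q P)) : Set (AmbientG q P)) :=
        Sylow.smul_eq_iff_mem_normalizer.mp hE
      have hmem : b * inr z * b⁻¹ ∈ (inr : P →* AmbientG q P).range :=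
        (Subgroup.mem_normalizer_iff.mp hbn (inr z)).mp ⟨z, rfl⟩
      have hkey : b * inr z * b⁻¹ = inl (w * ((coordAct q P) z w)⁻¹) * inr z := by
        rw [hbdef, ← map_inv]
        calc (inl w : AmbientG q P) * inr z * inl w⁻¹
            = inl w * (inr z * inl w⁻¹) := by rw [mul_assoc]
          _ = inl w * (inl ((coordAct q P) z w⁻¹) * inr z) := by rw [hcomm]
          _ = inl (w * ((coordAct q P) z w)⁻¹) * inr z := by rw [← mul_assoc, ← map_mul, map_inv]
      rw [hkey] at hmem
      have hone : w * ((coordAct q P) z w)⁻¹ = 1 := hmem_range _ _ hmem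
      exact hw_move (mul_inv_eq_one.mp hone).symm
    · show (inr y : AmbientG q P) ∈ ((b • S : Sylow p (AmbientG q P)) : Subgroup (AmbientG q P))
      rw [Sylow.coe_subgroup_smul, Subgroup.mem_pointwise_smul_iff_inv_smul_mem,
        ← map_inv MulAut.conj b]
      have hsmul : MulAut.conj b⁻¹ • (inr y : AmbientG q P) = b⁻¹ * inr y * b⁻¹⁻¹ := rfl
      rw [hsmul, inv_inv]
      have hkey2 : (b⁻¹ : AmbientG q P) * inr y * b = inr y := by
        rw [hbdef, ← map_inv]
        calc (inl w⁻¹ : AmbientG q P) * inr y * inl w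
            = inl w⁻¹ * (inr y * inl w) := by rw [mul_assoc]
          _ = inl w⁻¹ * (inl ((coordAct q P) y w) * inr y) := by rw [hcomm]
          _ = inl (w⁻¹ * (coordAct q P) y w) * inr y := by rw [← mul_assoc, ← map_mul]
          _ = inr y := by rw [hw_fix, inv_mul_cancel, map_one, one_mul]
      rw [hkey2]
      exact ⟨y, rfl⟩
  · exact ⟨Q₁, hQS, hQ₁ (Subgroup.mem_zpowers x)⟩

/-- Theorem A: for every non-cyclic finite `p`-group `P` of exponent `p`
there is a finite solvable group `G` whose Sylow `p`-subgroups are isomorphic to `P`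
and which has a redundant Sylow `p`-subgroup. -/
theorem exists_solvable_with_redundant_sylow
    (p : ℕ) [Fact p.Prime] (P : Type*) [Group P] [Finite P]
    (hP : IsPGroup p P) (hexp : ∀ x : P, x ^ p = 1) (hnc : ¬ IsCyclic P) :
    ∃ (G : Type) (_ : Group G) (_ : Finite G),
      IsSolvable G ∧
      (∀ Q : Sylow p G, Nonempty ((Q : Subgroup G) ≃* P)) ∧
      HasRedundantSylow p G := by
  haveI : Small.{0} P := inferInstance
  let f : Shrink.{0} P ≃* P := Shrink.mulEquiv
  haveI : Finite (Shrink.{0} P) := Finite.of_equiv P (equivShrink P)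
  have hP' : IsPGroup p (Shrink.{0} P) := hP.of_equiv f.symm
  have hnc' : ¬ IsCyclic (Shrink.{0} P) := fun _ =>
    hnc (isCyclic_of_surjective f.toMonoidHom f.surjective)
  obtain ⟨G, g1, g2, hs, hiso, hred⟩ := aux_exists_redundant p (Shrink.{0} P) hP' hnc'
  exact ⟨G, g1, g2, hs, fun Q => ⟨((hiso Q).some.trans f)⟩, hred⟩
end

section
/- Let p be a prime, let n ≤ p, let q be a prime power such that p divides q − 1, and let R ≤ GL(n, q) be the group of all diagonal matrices diag(x_1, ..., x_n) where each x_i lies in the p-part (unique Sylow p-subgroup) of the multiplicative group F_q^×. If A ∈ GL(n, q) normalizes R, then A is a monomial matrix, i.e., A has exactly one non-zero entry in each row and exactly one non-zero entry in each column. -/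
/-- `M` is a diagonal matrix all of whose diagonal entries have `p`-power order in `F^×`,
i.e. `M ∈ R = {diag(x_1, …, x_n) | x_i in the p-part of F_q^×}`. -/
def IsDiagWithPPowerOrderEntries (p : ℕ) {n : ℕ} {F : Type*} [Field F]
    (M : Matrix (Fin n) (Fin n) F) : Prop :=
  (∀ i j : Fin n, i ≠ j → M i j = 0) ∧ (∀ i : Fin n, ∃ k : ℕ, (M i i) ^ p ^ k = 1)

/-!
Since `p ∣ q - 1`, there is a primitive `p`-th root of unity `ζ ∈ F`, so for each column `j` the
matrix `D_j = diag(1, …, ζ, …, 1)` (with `ζ` in position `j`) lies in `R`.  If `A D_j A⁻¹ = E` is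
diagonal then `E A = A D_j`, which compares row `i` as `E i i * A i k = A i k * (D_j) k k`: all
nonzero entries of row `i` sit in columns where `D_j` takes the same value.  Since `ζ ≠ 1`, a row
cannot have nonzero entries in column `j` and in another column.  An invertible matrix with at most
one nonzero entry per row is monomial, by counting.
-/

open Matrix

section Monomial

variable {n : Type*} [Fintype n]

lemma Matrix.existsUnique_ne_zero_col_of_row_subsingleton {α : Type*} [Zero α]
    {A : Matrix n n α} (hrow : ∀ i j j', A i j ≠ 0 → A i j' ≠ 0 → j = j')
    (hcol : ∀ j, ∃ i, A i j ≠ 0) (j : n) : ∃! i, A i j ≠ 0 := by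
  choose g hg using hcol
  have hg_inj : Function.Injective g := fun j j' h =>
    hrow (g j) j j' (hg j) (h ▸ hg j')
  refine ⟨g j, hg j, fun i hi => ?_⟩
  obtain ⟨j', rfl⟩ := (Finite.injective_iff_surjective.mp hg_inj) i
  rw [hrow (g j') j' j (hg j') hi]

variable [DecidableEq n] {R : Type*} [CommRing R] [Nontrivial R] {A : Matrix n n R}

lemma Matrix.exists_ne_zero_row_of_isUnit_det (hA : IsUnit A.det) (i : n) : ∃ j, A i j ≠ 0 := by
  by_contra! h
  exact not_isUnit_zero (det_eq_zero_of_row_eq_zero i h ▸ hA)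

lemma Matrix.exists_ne_zero_col_of_isUnit_det (hA : IsUnit A.det) (j : n) : ∃ i, A i j ≠ 0 := by
  by_contra! h
  exact not_isUnit_zero (det_eq_zero_of_column_eq_zero j h ▸ hA)

lemma Matrix.isMonomial_of_isUnit_det_of_row_subsingleton (hA : IsUnit A.det)
    (hrow : ∀ i j j', A i j ≠ 0 → A i j' ≠ 0 → j = j') :
    (∀ i, ∃! j, A i j ≠ 0) ∧ (∀ j, ∃! i, A i j ≠ 0) := by
  refine ⟨fun i => ?_, existsUnique_ne_zero_col_of_row_subsingleton hrow
    (exists_ne_zero_col_of_isUnit_det hA)⟩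
  obtain ⟨j, hj⟩ := exists_ne_zero_row_of_isUnit_det hA i
  exact ⟨j, hj, fun j' hj' => hrow i j' j hj' hj⟩

end Monomial

lemma Matrix.GeneralLinearGroup.eq_of_isDiag_conj_diagonal {n R : Type*} [Fintype n]
    [DecidableEq n] [CommRing R] [IsDomain R] (A : GL n R) {d : n → R}
    (hdiag : (A * diagonal d * A⁻¹ : Matrix n n R).IsDiag) {i j j' : n}
    (hj : A i j ≠ 0) (hj' : A i j' ≠ 0) : d j = d j' := by
  set E : Matrix n n R := A * diagonal d * A⁻¹
  have hEA : E * A = A * diagonal d := by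
    simp only [E, Matrix.mul_assoc, A.inv_mul, Matrix.mul_one]
  have hrow (k : n) : E i i * A i k = A i k * d k := by
    have := congrFun (congrFun hEA i) k
    rwa [mul_apply, Fintype.sum_eq_single i fun m hm => by rw [hdiag (Ne.symm hm), zero_mul],
      mul_diagonal] at this
  have hEj : E i i = d j := mul_right_cancel₀ hj ((hrow j).trans (mul_comm _ _))
  have hEj' : E i i = d j' := mul_right_cancel₀ hj' ((hrow j').trans (mul_comm _ _))
  exact hEj.symm.trans hEj'

lemma isUnit_diagonal_update_one {n R : Type*} [Fintype n] [DecidableEq n] [CommRing R] {z : R}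
    (hz : IsUnit z) (j : n) : IsUnit (diagonal (Function.update 1 j z)) := by
  refine isUnit_diagonal.mpr (Pi.isUnit_iff.mpr fun k => ?_)
  rcases eq_or_ne k j with rfl | hk
  · simpa using hz
  · simp [Function.update_of_ne hk]

lemma isDiagWithPPowerOrderEntries_diagonal_update_one (p : ℕ) {n : ℕ} {K : Type*} [Field K]
    {z : K} (hz : z ^ p = 1) (j : Fin n) :
    IsDiagWithPPowerOrderEntries p (diagonal (Function.update 1 j z)) := by
  refine ⟨fun _ _ => diagonal_apply_ne _, fun k => ?_⟩
  rcases eq_or_ne k j with rfl | hk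
  · exact ⟨1, by simpa using hz⟩
  · exact ⟨0, by simp [Function.update_of_ne hk]⟩

theorem normalizer_of_diagonal_p_torus_is_monomial_general
    (p : ℕ) (hp : p.Prime) (n : ℕ)
    (F : Type*) [Field F] [Fintype F] (q : ℕ) (hq : Fintype.card F = q)
    (hpq : p ∣ q - 1)
    (A : Matrix.GeneralLinearGroup (Fin n) F)
    (hA : ∀ M : Matrix (Fin n) (Fin n) F, IsUnit M →
      IsDiagWithPPowerOrderEntries p M →
      IsDiagWithPPowerOrderEntries p ((A : Matrix (Fin n) (Fin n) F) * M *
        ((A⁻¹ : Matrix.GeneralLinearGroup (Fin n) F) : Matrix (Fin n) (Fin n) F))) :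
    (∀ i : Fin n, ∃! j : Fin n, (A : Matrix (Fin n) (Fin n) F) i j ≠ 0) ∧
    (∀ j : Fin n, ∃! i : Fin n, (A : Matrix (Fin n) (Fin n) F) i j ≠ 0) := by
  classical
  have : Fact p.Prime := ⟨hp⟩
  obtain ⟨ζ, hζ_order⟩ : ∃ ζ : Fˣ, orderOf ζ = p :=
    exists_prime_orderOf_dvd_card p (by rwa [Fintype.card_units, hq])
  have hζ : IsPrimitiveRoot (ζ : F) p :=
    IsPrimitiveRoot.coe_units_iff.mpr (hζ_order ▸ IsPrimitiveRoot.orderOf ζ)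
  have hrow (i j j' : Fin n) (hj : A i j ≠ 0) (hj' : A i j' ≠ 0) : j = j' := by
    by_contra hne
    have hD := hA _ (isUnit_diagonal_update_one ζ.isUnit j)
      (isDiagWithPPowerOrderEntries_diagonal_update_one p hζ.pow_eq_one j)
    have := A.eq_of_isDiag_conj_diagonal hD.1 hj hj'
    simp only [Function.update_self, Function.update_of_ne (Ne.symm hne), Pi.one_apply] at this
    exact hζ.ne_one hp.one_lt this
  exact isMonomial_of_isUnit_det_of_row_subsingleton (isUnits_det_units A) hrow

/-- let `p` be a prime, `n ≤ p`, and `F` the field with `q` elements where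
`p ∣ q - 1`.  If `A ∈ GL(n, q)` normalizes the group `R` of diagonal matrices with entries
in the Sylow `p`-subgroup of `F^×`, then `A` is monomial: it has exactly one nonzero entry
in each row and in each column. -/
theorem normalizer_of_diagonal_p_torus_is_monomial
    (p : ℕ) (hp : p.Prime) (n : ℕ) (hn : n ≤ p)
    (F : Type*) [Field F] [Fintype F] (q : ℕ) (hq : Fintype.card F = q)
    (hpq : p ∣ q - 1)
    (A : Matrix.GeneralLinearGroup (Fin n) F)
    (hA : ∀ M : Matrix (Fin n) (Fin n) F, IsUnit M →
      IsDiagWithPPowerOrderEntries p M →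
      IsDiagWithPPowerOrderEntries p ((A : Matrix (Fin n) (Fin n) F) * M *
        ((A⁻¹ : Matrix.GeneralLinearGroup (Fin n) F) : Matrix (Fin n) (Fin n) F))) :
    (∀ i : Fin n, ∃! j : Fin n, (A : Matrix (Fin n) (Fin n) F) i j ≠ 0) ∧
    (∀ j : Fin n, ∃! i : Fin n, (A : Matrix (Fin n) (Fin n) F) i j ≠ 0) :=
  normalizer_of_diagonal_p_torus_is_monomial_general p hp n F q hq hpq A hA
end

section
/- Let q be a prime power such that none of q − 1, q, q + 1 is a power of 2, and let G = SL(2, q). If x is a 2-element of G, then q − 1 or q + 1 divides |C_G(x)|. In particular, the centralizer C_G(x) is not a 2-group. -/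
open Polynomial Matrix


lemma ch2 {F : Type*} [Field F] (A : Matrix (Fin 2) (Fin 2) F) :
    A * A = (A 0 0 + A 1 1) • A - A.det • 1 := by
  ext i j
  fin_cases i <;> fin_cases j <;>
    simp [Matrix.mul_apply, Fin.sum_univ_two, Matrix.det_fin_two, Matrix.one_apply] <;> ring

section NS
variable {F : Type*} [Field F] (A : Matrix (Fin 2) (Fin 2) F)

noncomputable def pA : F[X] := X ^ 2 - C (A 0 0 + A 1 1) * X + C 1

lemma pA_monic : (pA A).Monic := by
  unfold pA
  monicity!

lemma pA_natDegree : (pA A).natDegree = 2 := by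
  unfold pA; compute_degree!

lemma eval₂_pA (hdet : A.det = 1) :
    Polynomial.eval₂ (algebraMap F (Matrix (Fin 2) (Fin 2) F)) A (pA A) = 0 := by
  have := ch2 A
  have hrw : pA A = monomial 2 1 - monomial 1 (A 0 0 + A 1 1) + monomial 0 1 := by
    unfold pA
    rw [Polynomial.X_pow_eq_monomial, Polynomial.C_mul_X_eq_monomial]
    simp
  rw [hrw]
  simp only [eval₂_add, eval₂_sub, eval₂_monomial, Algebra.algebraMap_eq_smul_one, pow_two]
  rw [smul_mul_assoc, one_mul, ch2 A, hdet, smul_mul_assoc, one_mul, one_smul]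
  simp only [pow_zero, pow_one, mul_one, one_smul]
  abel
noncomputable def psiA (hdet : A.det = 1) :
    AdjoinRoot (pA A) →+* Matrix (Fin 2) (Fin 2) F :=
  Ideal.Quotient.lift (Ideal.span {pA A})
    (Polynomial.eval₂RingHom' (algebraMap F (Matrix (Fin 2) (Fin 2) F)) A
      (fun a => (Algebra.commutes a A)))
    (by
      intro g hg
      rw [Ideal.mem_span_singleton] at hg
      obtain ⟨c, rfl⟩ := hg
      rw [_root_.map_mul]
      have h0 : (Polynomial.eval₂RingHom' (algebraMap F (Matrix (Fin 2) (Fin 2) F)) A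
          (fun a => (Algebra.commutes a A))) (pA A) = 0 := eval₂_pA A hdet
      rw [h0, zero_mul])

lemma psiA_mk (hdet : A.det = 1) (g : F[X]) :
    psiA A hdet (AdjoinRoot.mk (pA A) g) =
      Polynomial.eval₂ (algebraMap F (Matrix (Fin 2) (Fin 2) F)) A g := rfl

lemma psiA_root (hdet : A.det = 1) : psiA A hdet (AdjoinRoot.root (pA A)) = A := by
  rw [AdjoinRoot.root, psiA_mk]
  simp

lemma psiA_inj (hdet : A.det = 1) (hns : ∀ s : F, A ≠ s • (1 : Matrix (Fin 2) (Fin 2) F)) :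
    Function.Injective (psiA A hdet) := by
  rw [injective_iff_map_eq_zero]
  intro z hz
  obtain ⟨g, rfl⟩ := AdjoinRoot.mk_surjective z
  set r := g %ₘ (pA A) with hr
  have hmkeq : AdjoinRoot.mk (pA A) g = AdjoinRoot.mk (pA A) r := by
    have h1 : g - r = pA A * (g /ₘ pA A) := by
      have := Polynomial.modByMonic_add_div g (pA A)
      linear_combination (norm := ring_nf) -this - hr
    have : AdjoinRoot.mk (pA A) (g - r) = 0 := by
      rw [AdjoinRoot.mk_eq_zero, h1]; exact Dvd.intro _ rfl
    rw [map_sub, sub_eq_zero] at this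
    exact this
  rw [hmkeq] at hz ⊢
  have hdeg : r.natDegree ≤ 1 := by
    have h2 : (pA A).natDegree = 2 := pA_natDegree A
    have h3 := Polynomial.natDegree_modByMonic_lt g (pA_monic A)
      (fun h => by simp [h] at h2)
    rw [← hr] at h3
    omega
  have hrepr := Polynomial.eq_X_add_C_of_natDegree_le_one hdeg
  rw [psiA_mk, hrepr] at hz
  rw [show (C (r.coeff 1) * X + C (r.coeff 0) : F[X]) =
      monomial 1 (r.coeff 1) + monomial 0 (r.coeff 0) by
    rw [Polynomial.C_mul_X_eq_monomial]; simp [← Polynomial.C_mul_X_pow_eq_monomial]] at hz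
  simp only [eval₂_add, eval₂_monomial, pow_one, pow_zero, mul_one,
    Algebra.algebraMap_eq_smul_one, smul_mul_assoc, one_mul] at hz
  -- hz : r.coeff 1 • A + r.coeff 0 • 1 = 0
  have hc1 : r.coeff 1 = 0 := by
    by_contra hne
    apply hns (-(r.coeff 0) / r.coeff 1)
    have h4 : r.coeff 1 • A = -(r.coeff 0 • (1 : Matrix (Fin 2) (Fin 2) F)) :=
      eq_neg_of_add_eq_zero_left hz
    rw [div_eq_inv_mul, mul_smul, neg_smul, ← h4, smul_smul, inv_mul_cancel₀ hne, one_smul]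
  have hc0 : r.coeff 0 = 0 := by
    rw [hc1, zero_smul, zero_add] at hz
    have := congrArg (fun m : Matrix (Fin 2) (Fin 2) F => m 0 0) hz
    simpa [Matrix.one_apply] using this
  rw [hrepr, hc0, hc1]
  simp
noncomputable def chiA (hdet : A.det = 1) : (AdjoinRoot (pA A))ˣ →* Fˣ :=
  (Units.map Matrix.detMonoidHom).comp (Units.map (psiA A hdet).toMonoidHom)

lemma chiA_val (hdet : A.det = 1) (u : (AdjoinRoot (pA A))ˣ) :
    ((chiA A hdet u : Fˣ) : F) = (psiA A hdet (u : AdjoinRoot (pA A))).det := by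
  simp [chiA]

end NS

section NS2
variable {F : Type*} [Field F] (x : Matrix.SpecialLinearGroup (Fin 2) F)

noncomputable def thetaA : (chiA (x : Matrix (Fin 2) (Fin 2) F) x.2).ker →*
    Matrix.SpecialLinearGroup (Fin 2) F :=
  MonoidHom.mk' (fun z => ⟨psiA (x : Matrix (Fin 2) (Fin 2) F) x.2 z.val.val, by
    have hz : chiA (x : Matrix (Fin 2) (Fin 2) F) x.2 z.val = 1 := z.2
    have h2 := congrArg Units.val hz
    rw [chiA_val] at h2
    simpa using h2⟩)
    (fun z w => Subtype.ext (by
      simp only [Subgroup.coe_mul, Units.val_mul, _root_.map_mul,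
        Matrix.SpecialLinearGroup.coe_mul]
      rfl))

lemma thetaA_inj (hns : ∀ s : F, (x : Matrix (Fin 2) (Fin 2) F) ≠ s • 1) :
    Function.Injective (thetaA x) := by
  intro z w h
  have h2 : psiA (x : Matrix (Fin 2) (Fin 2) F) x.2 z.val.val =
      psiA (x : Matrix (Fin 2) (Fin 2) F) x.2 w.val.val :=
    congrArg (fun g : Matrix.SpecialLinearGroup (Fin 2) F => (g : Matrix (Fin 2) (Fin 2) F)) h
  exact Subtype.ext (Units.ext (psiA_inj _ x.2 hns h2))

lemma thetaA_range_le : (thetaA x).range ≤ Subgroup.centralizer {x} := by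
  rintro g ⟨z, rfl⟩
  rw [Subgroup.mem_centralizer_iff]
  rintro h hh
  rw [Set.mem_singleton_iff] at hh
  rw [hh]
  refine Subtype.ext ?_
  show (x : Matrix (Fin 2) (Fin 2) F) * _ = _ * (x : Matrix (Fin 2) (Fin 2) F)
  have key : psiA (x : Matrix (Fin 2) (Fin 2) F) x.2 (AdjoinRoot.root _ * z.val.val) =
      psiA (x : Matrix (Fin 2) (Fin 2) F) x.2 (z.val.val * AdjoinRoot.root _) := by
    rw [mul_comm]
  rw [_root_.map_mul, _root_.map_mul, psiA_root] at key
  exact key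

lemma ker_dvd_centralizer (hns : ∀ s : F, (x : Matrix (Fin 2) (Fin 2) F) ≠ s • 1) :
    Nat.card (chiA (x : Matrix (Fin 2) (Fin 2) F) x.2).ker ∣
      Nat.card (Subgroup.centralizer {x}) := by
  have h1 : Nat.card (chiA (x : Matrix (Fin 2) (Fin 2) F) x.2).ker =
      Nat.card (thetaA x).range :=
    Nat.card_congr (MonoidHom.ofInjective (thetaA_inj x hns)).toEquiv
  rw [h1]
  exact Subgroup.card_dvd_of_le (thetaA_range_le x)

end NS2

section NS3
variable {F : Type*} [Field F] [Fintype F] (A : Matrix (Fin 2) (Fin 2) F)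

lemma finiteK : Finite (AdjoinRoot (pA A)) := by
  have : Module.Finite F (AdjoinRoot (pA A)) :=
    Module.Finite.of_basis (AdjoinRoot.powerBasis' (pA_monic A)).basis
  exact Module.finite_of_finite F

lemma exists_r (hdet : A.det = 1) :
    ∃ r : ℕ, 0 < r ∧ r ∣ (Fintype.card F - 1) ∧
      Nat.card (chiA A hdet).ker * r = Nat.card (AdjoinRoot (pA A))ˣ := by
  have : Finite (AdjoinRoot (pA A)) := finiteK A
  refine ⟨Nat.card (chiA A hdet).range, Nat.card_pos, ?_, ?_⟩
  · have h := Subgroup.card_subgroup_dvd_card (chiA A hdet).range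
    rwa [Nat.card_units, Nat.card_eq_fintype_card (α := F)] at h
  · have hK := Subgroup.card_eq_card_quotient_mul_card_subgroup (chiA A hdet).ker
    have hQ : Nat.card ((AdjoinRoot (pA A))ˣ ⧸ (chiA A hdet).ker) =
        Nat.card (chiA A hdet).range :=
      Nat.card_congr (QuotientGroup.quotientKerEquivRange _).toEquiv
    rw [hQ, mul_comm] at hK
    exact hK.symm

lemma card_units_nonsplit (hirr : Irreducible (pA A)) :
    Nat.card (AdjoinRoot (pA A))ˣ = Fintype.card F ^ 2 - 1 := by
  haveI : Fact (Irreducible (pA A)) := ⟨hirr⟩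
  have : Finite (AdjoinRoot (pA A)) := finiteK A
  have : Fintype (AdjoinRoot (pA A)) := Fintype.ofFinite _
  rw [Nat.card_units, Nat.card_eq_fintype_card]
  congr 1
  rw [Module.card_eq_pow_finrank (K := F) (V := AdjoinRoot (pA A))]
  congr 1
  rw [(AdjoinRoot.powerBasis' (pA_monic A)).finrank, AdjoinRoot.powerBasis'_dim, pA_natDegree]

lemma card_units_split {a b : F} (ha : (pA A).eval a = 0) (hb : (pA A).eval b = 0)
    (hab : a ≠ b) :
    Nat.card (AdjoinRoot (pA A))ˣ = (Fintype.card F - 1) ^ 2 := by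
  classical
  set φ : F[X] →+* F × F := (Polynomial.evalRingHom a).prod (Polynomial.evalRingHom b) with hφ
  have hvan : ∀ g ∈ Ideal.span {pA A}, φ g = 0 := by
    intro g hg
    rw [Ideal.mem_span_singleton] at hg
    obtain ⟨c, rfl⟩ := hg
    rw [_root_.map_mul]
    have : φ (pA A) = 0 := by
      simp [hφ, Prod.ext_iff, ha, hb]
    rw [this, zero_mul]
  set e : AdjoinRoot (pA A) →+* F × F := Ideal.Quotient.lift (Ideal.span {pA A}) φ hvan with he
  have hemk : ∀ g : F[X], e (AdjoinRoot.mk (pA A) g) = (g.eval a, g.eval b) := fun g => rfl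
  have hinj : Function.Injective e := by
    rw [injective_iff_map_eq_zero]
    intro z hz
    obtain ⟨g, rfl⟩ := AdjoinRoot.mk_surjective z
    set r := g %ₘ (pA A) with hr
    have hmkeq : AdjoinRoot.mk (pA A) g = AdjoinRoot.mk (pA A) r := by
      have h1 : g - r = pA A * (g /ₘ pA A) := by
        have := Polynomial.modByMonic_add_div g (pA A)
        linear_combination (norm := ring_nf) -this - hr
      have : AdjoinRoot.mk (pA A) (g - r) = 0 := by
        rw [AdjoinRoot.mk_eq_zero, h1]; exact Dvd.intro _ rfl
      rw [map_sub, sub_eq_zero] at this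
      exact this
    rw [hmkeq] at hz ⊢
    have hdeg : r.natDegree ≤ 1 := by
      have h2 : (pA A).natDegree = 2 := pA_natDegree A
      have h3 := Polynomial.natDegree_modByMonic_lt g (pA_monic A)
        (fun h => by simp [h] at h2)
      rw [← hr] at h3
      omega
    have hrepr := Polynomial.eq_X_add_C_of_natDegree_le_one hdeg
    rw [hemk] at hz
    rw [Prod.ext_iff] at hz
    obtain ⟨hza, hzb⟩ := hz
    rw [hrepr] at hza hzb
    simp only [Polynomial.eval_add, Polynomial.eval_mul, Polynomial.eval_C,
      Polynomial.eval_X, Prod.fst_zero, Prod.snd_zero] at hza hzb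
    have hc1 : r.coeff 1 = 0 := by
      have : r.coeff 1 * (a - b) = 0 := by linear_combination hza - hzb
      rcases mul_eq_zero.mp this with h | h
      · exact h
      · exact absurd (sub_eq_zero.mp h) hab
    have hc0 : r.coeff 0 = 0 := by
      rw [hc1, zero_mul, zero_add] at hza
      exact hza
    rw [hrepr, hc1, hc0]
    simp
  have hsurj : Function.Surjective e := by
    rintro ⟨u, v⟩
    refine ⟨AdjoinRoot.mk (pA A) (Polynomial.C ((u - v) / (a - b)) * Polynomial.X +
      Polynomial.C (u - (u - v) / (a - b) * a)), ?_⟩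
    rw [hemk]
    have hab' : a - b ≠ 0 := sub_ne_zero.mpr hab
    simp only [Polynomial.eval_add, Polynomial.eval_mul, Polynomial.eval_C, Polynomial.eval_X,
      Prod.mk.injEq]
    constructor
    · ring
    · field_simp
      ring
  have eqv : (AdjoinRoot (pA A))ˣ ≃* (F × F)ˣ :=
    Units.mapEquiv (RingEquiv.ofBijective e ⟨hinj, hsurj⟩).toMulEquiv
  rw [Nat.card_congr eqv.toEquiv, Nat.card_congr (MulEquiv.prodUnits).toEquiv,
    Nat.card_prod, Nat.card_units, Nat.card_eq_fintype_card (α := F), sq]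

end NS3

section DR
variable {F : Type*} [Field F]

lemma double_root_two_eq_zero (A : Matrix (Fin 2) (Fin 2) F) (hdet : A.det = 1)
    (a : F) (haroot : a * a - (A 0 0 + A 1 1) * a + 1 = 0)
    (hdr : A 0 0 + A 1 1 = 2 * a)
    (hns : A ≠ a • 1) (m : ℕ) (hm : A ^ m = 1) :
    ((m : F) = 0) := by
  set t := A 0 0 + A 1 1 with ht
  have ha2 : a * a = 1 := by rw [hdr] at haroot; linear_combination -haroot
  have ha0 : a ≠ 0 := fun h => by rw [h] at ha2; simp at ha2
  obtain ⟨N, hN⟩ : ∃ N, N = A - a • (1 : Matrix (Fin 2) (Fin 2) F) := ⟨_, rfl⟩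
  have hNne : N ≠ 0 := fun h => hns (by rw [h] at hN; exact (sub_eq_zero.mp hN.symm).symm ▸ rfl)
  have hAA : A * A = t • A - (1 : Matrix (Fin 2) (Fin 2) F) := by
    rw [ch2 A, hdet, one_smul]
  have hNN : N * N = 0 := by
    rw [hN, sub_mul, mul_sub, mul_sub, hAA, smul_mul_assoc, one_mul, mul_smul_comm,
      mul_one, smul_mul_assoc, one_mul, smul_smul, ha2, hdr]
    have : (2 : F) * a = a + a := by ring
    rw [this, add_smul]
    abel_nf
    simp
  have hA : A = a • (1 : Matrix (Fin 2) (Fin 2) F) + N := by rw [hN]; abel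
  have hpow : ∀ n : ℕ, A ^ n = (a ^ n) • (1 : Matrix (Fin 2) (Fin 2) F) +
      ((n : F) * a ^ (n + 1)) • N := by
    intro n
    induction n with
    | zero => simp
    | succ n ih =>
      rw [pow_succ, ih]
      conv_lhs => rw [hA]
      rw [add_mul, mul_add, mul_add, smul_mul_smul_comm, one_mul, smul_mul_assoc, one_mul,
        smul_mul_smul_comm, mul_one, smul_mul_assoc, hNN, smul_zero, add_zero]
      match_scalars
      · push_cast; ring
      · push_cast; linear_combination (-(a ^ n) : F) * ha2
  have hfin := hpow m
  rw [hm] at hfin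
  have hrearr : ((m : F) * a ^ (m + 1)) • N = (1 - a ^ m) • (1 : Matrix (Fin 2) (Fin 2) F) := by
    rw [sub_smul, one_smul]
    exact eq_sub_of_add_eq' hfin.symm
  set c := (m : F) * a ^ (m + 1) with hc
  set d := 1 - a ^ m with hd
  have hsq : (d * d) • (1 : Matrix (Fin 2) (Fin 2) F) = 0 := by
    have : (c • N) * (c • N) = (d • (1 : Matrix (Fin 2) (Fin 2) F)) *
        (d • (1 : Matrix (Fin 2) (Fin 2) F)) := by rw [hrearr]
    rw [smul_mul_smul_comm, hNN, smul_zero, smul_mul_smul_comm, one_mul] at this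
    exact this.symm
  have hd0 : d = 0 := by
    have h5 : d * d = 0 := by
      rcases smul_eq_zero.mp hsq with h | h
      · exact h
      · exact absurd h one_ne_zero
    exact mul_self_eq_zero.mp h5
  have hc0 : c = 0 := by
    rw [hd0, zero_smul] at hrearr
    rcases smul_eq_zero.mp hrearr with h | h
    · exact h
    · exact absurd h hNne
  have : (m : F) = 0 := by
    rcases mul_eq_zero.mp hc0 with h | h
    · exact h
    · exact absurd h (pow_ne_zero _ ha0)
  exact this

end DR

section Scalar
variable {F : Type*} [Field F]

noncomputable def deltaT : Fˣ →* Matrix.SpecialLinearGroup (Fin 2) F :=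
  MonoidHom.mk' (fun u => ⟨!![(u : F), 0; 0, ((u⁻¹ : Fˣ) : F)], by
    simp [Matrix.det_fin_two_of]⟩)
    (fun u v => Subtype.ext (by
      show !![((u*v : Fˣ) : F), 0; 0, (((u*v)⁻¹ : Fˣ) : F)] = _ * _
      show _ = !![(u : F), 0; 0, ((u⁻¹ : Fˣ) : F)] * !![(v : F), 0; 0, ((v⁻¹ : Fˣ) : F)]
      rw [Matrix.mul_fin_two]
      congr 1 <;> simp [mul_comm]))

lemma deltaT_inj : Function.Injective (deltaT (F := F)) := by
  intro u v h
  have h2 := congrArg (fun g : Matrix.SpecialLinearGroup (Fin 2) F =>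
    (g : Matrix (Fin 2) (Fin 2) F) 0 0) h
  exact Units.ext h2

lemma scalar_case [Fintype F] (x : Matrix.SpecialLinearGroup (Fin 2) F) (s : F)
    (hs : (x : Matrix (Fin 2) (Fin 2) F) = s • 1) :
    (Fintype.card F - 1) ∣ Nat.card (Subgroup.centralizer {x} :
      Subgroup (Matrix.SpecialLinearGroup (Fin 2) F)) := by
  have hle : (deltaT (F := F)).range ≤ Subgroup.centralizer {x} := by
    rintro g ⟨u, rfl⟩
    rw [Subgroup.mem_centralizer_iff]
    rintro h hh
    rw [Set.mem_singleton_iff] at hh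
    rw [hh]
    refine Subtype.ext ?_
    show (x : Matrix (Fin 2) (Fin 2) F) * _ = _ * (x : Matrix (Fin 2) (Fin 2) F)
    rw [hs, smul_mul_assoc, one_mul, mul_smul_comm, mul_one]
  have hcard : Nat.card (deltaT (F := F)).range = Fintype.card F - 1 := by
    rw [← Nat.card_congr (MonoidHom.ofInjective (deltaT_inj (F := F))).toEquiv,
      Nat.card_units, Nat.card_eq_fintype_card]
  rw [← hcard]
  exact Subgroup.card_dvd_of_le hle

end Scalar



/-- let `q` be a prime power (the cardinality of the finite field `F`) such
that none of `q - 1`, `q`, `q + 1` is a power of `2`, and let `G = SL(2, q)`.  If `x` is a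
`2`-element of `G`, then `q - 1` or `q + 1` divides `|C_G(x)|`; in particular `C_G(x)` is
not a `2`-group. -/
theorem sl2_centralizer_of_two_element
    (F : Type*) [Field F] [Fintype F] (q : ℕ) (hq : Fintype.card F = q)
    (h1 : ∀ k : ℕ, q - 1 ≠ 2 ^ k) (h2 : ∀ k : ℕ, q ≠ 2 ^ k)
    (h3 : ∀ k : ℕ, q + 1 ≠ 2 ^ k)
    (x : Matrix.SpecialLinearGroup (Fin 2) F)
    (hx : ∃ k : ℕ, orderOf x = 2 ^ k) :
    ((q - 1 ∣ Nat.card (Subgroup.centralizer {x} :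
        Subgroup (Matrix.SpecialLinearGroup (Fin 2) F))) ∨
     (q + 1 ∣ Nat.card (Subgroup.centralizer {x} :
        Subgroup (Matrix.SpecialLinearGroup (Fin 2) F)))) ∧
    ¬ IsPGroup 2 (Subgroup.centralizer {x} :
        Subgroup (Matrix.SpecialLinearGroup (Fin 2) F)) := by
  obtain ⟨k, hk⟩ := hx
  have hq2 : 2 ≤ q := hq ▸ Fintype.one_lt_card
  set A : Matrix (Fin 2) (Fin 2) F := (x : Matrix (Fin 2) (Fin 2) F) with hA
  have main : (q - 1 ∣ Nat.card (Subgroup.centralizer {x} :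
        Subgroup (Matrix.SpecialLinearGroup (Fin 2) F))) ∨
     (q + 1 ∣ Nat.card (Subgroup.centralizer {x} :
        Subgroup (Matrix.SpecialLinearGroup (Fin 2) F))) := by
    by_cases hsc : ∃ s : F, A = s • 1
    · obtain ⟨s, hs⟩ := hsc
      left
      rw [← hq]
      exact scalar_case x s hs
    · push_neg at hsc
      have hker := ker_dvd_centralizer x hsc
      obtain ⟨r, hr0, ⟨s, hrs⟩, hcard⟩ := exists_r A x.2
      rw [hq] at hrs
      by_cases hroot : ∃ a : F, (pA A).eval a = 0
      · obtain ⟨a, ha⟩ := hroot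
        have ha' : a * a - (A 0 0 + A 1 1) * a + 1 = 0 := by
          simp only [pA, Polynomial.eval_add, Polynomial.eval_sub, Polynomial.eval_mul,
            Polynomial.eval_pow, Polynomial.eval_X, Polynomial.eval_C] at ha
          linear_combination ha
        by_cases hab : (A 0 0 + A 1 1) - a = a
        · -- double root: contradiction with 2-element
          exfalso
          have hdr : A 0 0 + A 1 1 = 2 * a := by linear_combination hab
          have hm : A ^ (2 ^ k) = 1 := by
            have := pow_orderOf_eq_one x
            rw [hk] at this
            have h5 := congrArg (fun g : Matrix.SpecialLinearGroup (Fin 2) F =>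
              (g : Matrix (Fin 2) (Fin 2) F)) this
            simpa [hA] using h5
          have h2F := double_root_two_eq_zero A x.2 a ha' hdr (hsc a) (2 ^ k) hm
          have hk0 : k ≠ 0 := by
            intro h0
            rw [h0, pow_zero, pow_one] at hm
            exact hsc 1 (by rw [hm, one_smul])
          rw [Nat.cast_pow, Nat.cast_ofNat, pow_eq_zero_iff hk0] at h2F
          -- h2F : (2 : F) = 0
          have hchar : ringChar F = 2 := by
            have hdvd : ringChar F ∣ 2 := by
              rw [← Nat.cast_ofNat (R := F)] at h2F
              exact (CharP.cast_eq_zero_iff F (ringChar F) 2).mp h2F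
            exact (Nat.prime_two.eq_one_or_self_of_dvd _ hdvd).resolve_left
              CharP.ringChar_ne_one
          haveI : CharP F 2 := hchar ▸ ringChar.charP F
          obtain ⟨n, hn2, hcF⟩ := FiniteField.card F 2
          exact h2 n (by rw [← hq, hcF])
        · -- split case
          left
          have hb : (pA A).eval ((A 0 0 + A 1 1) - a) = 0 := by
            simp only [pA, Polynomial.eval_add, Polynomial.eval_sub, Polynomial.eval_mul,
              Polynomial.eval_pow, Polynomial.eval_X, Polynomial.eval_C]
            linear_combination ha'
          have hsplit := card_units_split A hb ha hab
          rw [hq] at hsplit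
          rw [hsplit] at hcard
          have hker_eq : Nat.card (chiA A x.2).ker = s * (q - 1) := by
            apply Nat.eq_of_mul_eq_mul_right hr0
            rw [hcard, hrs]
            ring
          refine dvd_trans ?_ hker
          rw [hker_eq]
          exact dvd_mul_left (q - 1) s
      · -- nonsplit case
        right
        push_neg at hroot
        have hirr : Irreducible (pA A) := by
          rw [Polynomial.irreducible_iff_roots_eq_zero_of_degree_le_three
            (by rw [pA_natDegree]) (by rw [pA_natDegree]; omega)]
          rw [Multiset.eq_zero_iff_forall_notMem]
          intro a ha
          rw [Polynomial.mem_roots (pA_monic A).ne_zero] at ha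
          exact hroot a ha
        have hns := card_units_nonsplit A hirr
        rw [hq] at hns
        rw [hns] at hcard
        have hfact : q ^ 2 - 1 = (q + 1) * (q - 1) := by
          have := Nat.sq_sub_sq q 1
          simpa using this
        have hker_eq : Nat.card (chiA A x.2).ker = (q + 1) * s := by
          apply Nat.eq_of_mul_eq_mul_right hr0
          rw [hcard, hfact, hrs]
          ring
        refine dvd_trans ?_ hker
        rw [hker_eq]
        exact dvd_mul_right (q + 1) s
  refine ⟨main, ?_⟩
  intro hP
  haveI : Fact (Nat.Prime 2) := ⟨Nat.prime_two⟩
  rw [IsPGroup.iff_card] at hP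
  obtain ⟨n, hn⟩ := hP
  rcases main with hdvd | hdvd
  · rw [hn] at hdvd
    obtain ⟨j, _, hj⟩ := (Nat.dvd_prime_pow Nat.prime_two).mp hdvd
    exact h1 j hj
  · rw [hn] at hdvd
    obtain ⟨j, _, hj⟩ := (Nat.dvd_prime_pow Nat.prime_two).mp hdvd
    exact h3 j hj
end

section
/- Let p be a prime and let G be a finite group whose Sylow p-subgroups have order p^n and are not normal in G. Then the number of p-elements of G is at least p^{n+1}. -/
set_option linter.unusedSectionVars false

open Finset in
private lemma aux_bonf {ι β : Type*} [DecidableEq ι] [DecidableEq β] (A : ι → Finset β)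
    (a b : ℕ) (s : Finset ι) (ha : ∀ i ∈ s, a ≤ (A i).card)
    (hb : ∀ i ∈ s, ∀ j ∈ s, i ≠ j → ((A i) ∩ (A j)).card ≤ b) :
    s.card * a ≤ (s.biUnion A).card + (s.card.choose 2) * b := by
  induction s using Finset.cons_induction with
  | empty => simp
  | cons i s hi ih =>
    have ih' := ih (fun j hj => ha j (mem_cons_of_mem hj))
      (fun j hj k hk hjk => hb j (mem_cons_of_mem hj) k (mem_cons_of_mem hk) hjk)
    have hA : a ≤ (A i).card := ha i (mem_cons_self i s)
    have hU : (A i ∪ s.biUnion A).card + (A i ∩ s.biUnion A).card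
        = (A i).card + (s.biUnion A).card := card_union_add_card_inter _ _
    have hI : (A i ∩ s.biUnion A).card ≤ s.card * b := by
      rw [inter_biUnion]
      refine (card_biUnion_le).trans ?_
      calc ∑ j ∈ s, (A i ∩ A j).card ≤ ∑ _j ∈ s, b := by
            refine Finset.sum_le_sum fun j hj => hb i (mem_cons_self i s) j (mem_cons_of_mem hj)
              (fun h => hi (h ▸ hj))
        _ = s.card * b := by rw [Finset.sum_const, smul_eq_mul]
    have hch : (s.card + 1).choose 2 = s.card.choose 2 + s.card := by
      rw [Nat.choose_succ_succ, Nat.choose_one_right, Nat.add_comm]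
    rw [Finset.cons_eq_insert, Finset.biUnion_insert, Finset.card_insert_of_notMem hi, hch]
    have hexp : (s.card + 1) * a = s.card * a + a := by ring
    have hexp2 : (s.card.choose 2 + s.card) * b = s.card.choose 2 * b + s.card * b := by ring
    omega

open Finset in
private lemma aux_unionD {ι β : Type*} [DecidableEq ι] [DecidableEq β] (A : ι → Finset β)
    (D : Finset β) (s : Finset ι) (hne : s.Nonempty) (hD : ∀ i ∈ s, D ⊆ A i)
    (hsub : ∀ i ∈ s, ∀ j ∈ s, i ≠ j → A i ∩ A j ⊆ D) (a : ℕ) (ha : ∀ i ∈ s, (A i).card = a) :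
    s.card * (a - D.card) + D.card ≤ (s.biUnion A).card := by
  classical
  have hdisj : ∀ i ∈ s, ∀ j ∈ s, i ≠ j → Disjoint (A i \ D) (A j \ D) := by
    intro i hi j hj hij
    rw [Finset.disjoint_left]
    intro x hxi hxj
    rcases Finset.mem_sdiff.mp hxi with ⟨hxi, hxD⟩
    rcases Finset.mem_sdiff.mp hxj with ⟨hxj, -⟩
    exact hxD (hsub i hi j hj hij (Finset.mem_inter.mpr ⟨hxi, hxj⟩))
  have hcard : (s.biUnion fun i => A i \ D).card = s.card * (a - D.card) := by
    rw [Finset.card_biUnion hdisj]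
    rw [Finset.sum_congr rfl (fun i hi => by rw [Finset.card_sdiff_of_subset (hD i hi), ha i hi])]
    rw [Finset.sum_const, smul_eq_mul]
  have hDdisj : Disjoint (s.biUnion fun i => A i \ D) D := by
    rw [Finset.disjoint_left]
    intro x hx hxD
    rcases Finset.mem_biUnion.mp hx with ⟨i, hi, hxi⟩
    exact (Finset.mem_sdiff.mp hxi).2 hxD
  have hsubU : (s.biUnion fun i => A i \ D) ∪ D ⊆ s.biUnion A := by
    intro x hx
    rcases Finset.mem_union.mp hx with hx | hx
    · rcases Finset.mem_biUnion.mp hx with ⟨i, hi, hxi⟩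
      exact Finset.mem_biUnion.mpr ⟨i, hi, (Finset.mem_sdiff.mp hxi).1⟩
    · obtain ⟨i, hi⟩ := hne
      exact Finset.mem_biUnion.mpr ⟨i, hi, hD i hi hx⟩
  calc s.card * (a - D.card) + D.card
      = ((s.biUnion fun i => A i \ D) ∪ D).card := by
        rw [Finset.card_union_of_disjoint hDdisj, hcard]
    _ ≤ (s.biUnion A).card := Finset.card_le_card hsubU

section main
variable (p : ℕ) [Fact p.Prime] {G : Type*} [Group G] [Finite G]

-- p-subgroup inside normalizer of Sylow is inside the Sylow
private lemma aux_mem_of_mem_normalizer (R : Sylow p G) {x : G}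
    (hx : ∃ k, x ^ p ^ k = 1) (hmem : x ∈ Subgroup.normalizer ((R : Subgroup G) : Set G)) :
    x ∈ (R : Subgroup G) := by
  have hz : IsPGroup p (Subgroup.zpowers x) := by
    obtain ⟨k, hk⟩ := hx
    have hdvd : orderOf x ∣ p ^ k := orderOf_dvd_of_pow_eq_one hk
    obtain ⟨j, hj, hoj⟩ := (Nat.dvd_prime_pow Fact.out).mp hdvd
    exact IsPGroup.iff_card.mpr ⟨j, by rw [Nat.card_zpowers, hoj]⟩
  have h1 : Subgroup.zpowers x ⊓ Subgroup.normalizer ((R : Subgroup G) : Set G) = Subgroup.zpowers x ⊓ R :=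
    hz.inf_normalizer_sylow R
  have h2 : x ∈ Subgroup.zpowers x ⊓ Subgroup.normalizer ((R : Subgroup G) : Set G) :=
    ⟨Subgroup.mem_zpowers x, hmem⟩
  rw [h1] at h2
  exact h2.2

private lemma aux_pow_elem (R : Sylow p G) {x : G} (hx : x ∈ (R : Subgroup G)) :
    ∃ k, orderOf x = p ^ k := by
  obtain ⟨k, hk⟩ := (IsPGroup.iff_orderOf.mp R.2) ⟨x, hx⟩
  exact ⟨k, by rw [← Subgroup.orderOf_mk x hx, hk]⟩

end main

set_option maxHeartbeats 1000000 in
/-- if the Sylow `p`-subgroups of a finite group `G` have order `p^n` and are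
not normal in `G`, then `G` has at least `p^(n+1)` `p`-elements. -/
theorem card_pElements_ge_of_not_normal_sylow
    (p : ℕ) [Fact p.Prime] (n : ℕ) (G : Type*) [Group G] [Finite G]
    (hcard : ∀ P : Sylow p G, Nat.card (P : Subgroup G) = p ^ n)
    (hnn : ∀ P : Sylow p G, ¬ (P : Subgroup G).Normal) :
    p ^ (n + 1) ≤ Nat.card {x : G // ∃ k : ℕ, orderOf x = p ^ k} := by
  classical
  have hp : p.Prime := Fact.out
  haveI : Fintype G := Fintype.ofFinite G
  haveI : Fintype (Sylow p G) := Fintype.ofFinite _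
  -- two distinct Sylow subgroups
  have hnt : ∃ P Q : Sylow p G, P ≠ Q := by
    by_contra h
    push_neg at h
    obtain ⟨P⟩ : Nonempty (Sylow p G) := inferInstance
    refine hnn P ⟨fun x hx g => ?_⟩
    have hg : g • P = P := h _ _
    have hgn := Sylow.smul_eq_iff_mem_normalizer.mp hg
    exact (Subgroup.mem_normalizer_iff.mp hgn x).mp hx
  obtain ⟨P₀, Q₀, hPQ₀⟩ := hnt
  haveI : Nonempty {pq : Sylow p G × Sylow p G // pq.1 ≠ pq.2} := ⟨⟨(P₀, Q₀), hPQ₀⟩⟩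
  obtain ⟨⟨⟨P, Q⟩, hPQ⟩, hmaxs⟩ := Finite.exists_max
    (fun pq : {pq : Sylow p G × Sylow p G // pq.1 ≠ pq.2} =>
      Nat.card ((pq.1.1 : Subgroup G) ⊓ (pq.1.2 : Subgroup G) : Subgroup G))
  set D : Subgroup G := (P : Subgroup G) ⊓ (Q : Subgroup G) with hD
  have hmax : ∀ R S : Sylow p G, R ≠ S →
      Nat.card ((R : Subgroup G) ⊓ (S : Subgroup G) : Subgroup G) ≤ Nat.card D :=
    fun R S h => hmaxs ⟨(R, S), h⟩
  obtain ⟨d, hd⟩ : ∃ d, Nat.card D = p ^ d :=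
    IsPGroup.iff_card.mp (P.2.to_inf_left)
  have hdn : d < n := by
    have hle : Nat.card D ≤ Nat.card (P : Subgroup G) :=
      Subgroup.card_le_of_le inf_le_left
    rw [hd, hcard P] at hle
    have hdle : d ≤ n := (Nat.pow_le_pow_iff_right hp.one_lt).mp hle
    rcases hdle.lt_or_eq with h | h
    · exact h
    · exfalso
      have hcardD : Nat.card (P : Subgroup G) ≤ Nat.card D := by
        rw [hd, hcard P, h]
      have hDP : D = (P : Subgroup G) :=
        Subgroup.eq_of_le_of_card_ge inf_le_left hcardD
      have hPQle : (P : Subgroup G) ≤ (Q : Subgroup G) := by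
        rw [← hDP]; exact inf_le_right
      have : (P : Subgroup G) = (Q : Subgroup G) :=
        Subgroup.eq_of_le_of_card_ge hPQle (by rw [hcard P, hcard Q])
      exact hPQ (Sylow.ext this)
  -- the target finset of p-elements
  set T : Finset G := Finset.univ.filter (fun x => ∃ k, orderOf x = p ^ k) with hT
  have hTcard : Nat.card {x : G // ∃ k : ℕ, orderOf x = p ^ k} = T.card := by
    rw [Nat.card_eq_fintype_card, Fintype.card_subtype]
  -- the finset of a Sylow subgroup
  set A : Sylow p G → Finset G := fun R => Set.toFinset ((R : Subgroup G) : Set G) with hA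
  have hAcard : ∀ R : Sylow p G, (A R).card = p ^ n := by
    intro R
    rw [hA, Set.toFinset_card, ← Nat.card_eq_fintype_card]
    exact hcard R
  have hAmem : ∀ R : Sylow p G, ∀ x, x ∈ A R ↔ x ∈ (R : Subgroup G) := by
    intro R x; rw [hA]; simp [Set.mem_toFinset]; exact Iff.rfl
  have hAinter : ∀ R S : Sylow p G,
      (A R ∩ A S).card = Nat.card ((R : Subgroup G) ⊓ (S : Subgroup G) : Subgroup G) := by
    intro R S
    have : A R ∩ A S = Set.toFinset (((R : Subgroup G) ⊓ (S : Subgroup G) : Subgroup G) : Set G) := by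
      ext x
      simp [hA, Set.mem_toFinset, Subgroup.mem_inf]
    rw [this, Set.toFinset_card]
    exact Nat.card_eq_fintype_card.symm
  have hsubT : ∀ s : Finset (Sylow p G), s.biUnion A ⊆ T := by
    intro s x hx
    rcases Finset.mem_biUnion.mp hx with ⟨R, _, hxR⟩
    rw [hT, Finset.mem_filter]
    exact ⟨Finset.mem_univ x, aux_pow_elem p R ((hAmem R x).mp hxR)⟩
  rw [hTcard]
  rcases Nat.lt_or_ge (d + 1) n with hcase | hcase
  · -- Case A : d + 2 ≤ n
    set k := n - d with hk
    have hk2 : 2 ≤ k := by omega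
    set Qg := (Q : Subgroup G) with hQg
    have hstab : MulAction.stabilizer Qg P = D.subgroupOf Qg := by
      ext x
      rw [MulAction.mem_stabilizer_iff, Subgroup.mem_subgroupOf, Subgroup.smul_def,
        Sylow.smul_eq_iff_mem_normalizer]
      constructor
      · intro hxn
        have hmem : (x : G) ∈ Qg ⊓ Subgroup.normalizer (P : Set G) := ⟨x.2, hxn⟩
        rw [Q.2.inf_normalizer_sylow P] at hmem
        exact ⟨hmem.2, x.2⟩
      · intro hxD
        exact Subgroup.le_normalizer hxD.1
    have hstabcard : Nat.card (MulAction.stabilizer Qg P) = p ^ d := by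
      rw [hstab, Nat.card_congr (Subgroup.subgroupOfEquivOfLe inf_le_right).toEquiv, hd]
    have horb : Nat.card (MulAction.orbit Qg P) * p ^ d = p ^ n := by
      rw [← hstabcard, ← hcard Q]
      rw [Nat.card_congr (MulAction.orbitEquivQuotientStabilizer Qg P)]
      exact (Subgroup.card_eq_card_quotient_mul_card_subgroup _).symm
    have horbcard : Nat.card (MulAction.orbit Qg P) = p ^ k := by
      have he : p ^ k * p ^ d = p ^ n := by rw [← pow_add]; congr 1; omega
      exact Nat.eq_of_mul_eq_mul_right (pow_pos hp.pos d) (horb.trans he.symm)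
    set s : Finset (Sylow p G) := Set.toFinset (MulAction.orbit Qg P) with hs
    have hscard : s.card = p ^ k := by
      rw [hs, Set.toFinset_card, ← Nat.card_eq_fintype_card, horbcard]
    have hbound := aux_bonf A (p ^ n) (p ^ d) s (fun R _ => (hAcard R).ge)
      (fun R _ S _ hRS => by rw [hAinter]; exact (hmax R S hRS).trans_eq hd)
    rw [hscard] at hbound
    have hUT : (s.biUnion A).card ≤ T.card := Finset.card_le_card (hsubT s)
    have e1 : p ^ k * p ^ n = p ^ (n + k) := by rw [← pow_add]; congr 1; omega
    have e2 : p ^ k * p ^ k * p ^ d = p ^ (n + k) := by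
      rw [← pow_add, ← pow_add]; congr 1; omega
    have h2c : 2 * ((p ^ k).choose 2) ≤ p ^ k * p ^ k := by
      rw [Nat.choose_two_right, Nat.mul_comm 2]
      calc p ^ k * (p ^ k - 1) / 2 * 2 ≤ p ^ k * (p ^ k - 1) :=
            Nat.div_mul_le_self _ 2
        _ ≤ p ^ k * p ^ k := Nat.mul_le_mul_left _ (Nat.sub_le _ _)
    have f2 : 2 * ((p ^ k).choose 2 * p ^ d) ≤ p ^ (n + k) := by
      calc 2 * ((p ^ k).choose 2 * p ^ d) = 2 * (p ^ k).choose 2 * p ^ d := by ring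
        _ ≤ p ^ k * p ^ k * p ^ d := Nat.mul_le_mul_right _ h2c
        _ = p ^ (n + k) := e2
    have e3 : 2 * p ^ (n + 1) ≤ p ^ (n + k) := by
      calc 2 * p ^ (n + 1) ≤ p * p ^ (n + 1) := Nat.mul_le_mul_right _ hp.two_le
        _ = p ^ (n + 2) := by ring
        _ ≤ p ^ (n + k) := Nat.pow_le_pow_right hp.pos (by omega)
    rw [e1] at hbound
    omega
  · -- Case B : d + 1 = n
    have hn : n = d + 1 := le_antisymm hcase hdn
    set Qg := (Q : Subgroup G) with hQg
    have hDQle : D ≤ Qg := inf_le_right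
    have hQD : ∀ q ∈ Qg, ∀ x ∈ D, q * x * q⁻¹ ∈ D := by
      set D' : Subgroup ↥Qg := D.subgroupOf Qg with hD'
      have hD'card : Nat.card D' = p ^ d := by
        rw [hD', Nat.card_congr (Subgroup.subgroupOfEquivOfLe hDQle).toEquiv, hd]
      have hQcard : Nat.card ↥Qg = p ^ n := hcard Q
      have hne : D' ≠ ⊤ := by
        intro h
        rw [h, Subgroup.card_top, hQcard] at hD'card
        exact absurd (Nat.pow_right_injective hp.two_le hD'card) (by omega)
      have hnc : NormalizerCondition ↥Qg := by
        haveI : Group.IsNilpotent ↥Qg := Q.2.isNilpotent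
        exact normalizerCondition_of_isNilpotent
      have hlt : D' < Subgroup.normalizer (D' : Set ↥Qg) := hnc D' (lt_top_iff_ne_top.mpr hne)
      have hdvd : Nat.card (Subgroup.normalizer (D' : Set ↥Qg)) ∣ p ^ n :=
        hQcard ▸ Subgroup.card_subgroup_dvd_card _
      obtain ⟨j, hj, hcardnorm⟩ := (Nat.dvd_prime_pow hp).mp hdvd
      have hgt : ¬ Nat.card (Subgroup.normalizer (D' : Set ↥Qg)) ≤ p ^ d := by
        intro hle
        exact hlt.ne (Subgroup.eq_of_le_of_card_ge hlt.le (hD'card ▸ hle))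
      have hjd : d < j := by
        by_contra hjd
        exact hgt (by rw [hcardnorm]; exact Nat.pow_le_pow_right hp.pos (by omega))
      have hjn : j = n := by omega
      have htop : Subgroup.normalizer (D' : Set ↥Qg) = ⊤ :=
        Subgroup.eq_top_of_card_eq _ (by rw [hcardnorm, hjn, hQcard])
      have hnormal : D'.Normal := Subgroup.normalizer_eq_top_iff.mp htop
      intro q hq x hx
      have hx' : (⟨x, hDQle hx⟩ : ↥Qg) ∈ D' := by rwa [Subgroup.mem_subgroupOf]
      have hconj := hnormal.conj_mem _ hx' ⟨q, hq⟩
      rw [Subgroup.mem_subgroupOf] at hconj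
      simpa using hconj
    set Ω := {R : Sylow p G // D ≤ (R : Subgroup G)} with hΩ
    letI actΩ : MulAction ↥Qg Ω :=
      { smul := fun q R => ⟨(q : G) • R.1, by
          intro x hx
          have hx' : (q : G)⁻¹ * x * (q : G) ∈ D := by
            have h0 := hQD (q : G)⁻¹ (inv_mem q.2) x hx
            simpa using h0
          have hmem : (q : G)⁻¹ * x * (q : G) ∈ (R.1 : Subgroup G) := R.2 hx'
          rw [Sylow.coe_subgroup_smul, Subgroup.mem_pointwise_smul_iff_inv_smul_mem]
          simpa [MulAut.conj] using hmem⟩,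
        one_smul := fun R => Subtype.ext
          (show ((1 : ↥Qg) : G) • R.1 = R.1 by rw [OneMemClass.coe_one, one_smul]),
        mul_smul := fun q r R => Subtype.ext
          (show ((q * r : ↥Qg) : G) • R.1 = (q : G) • ((r : G) • R.1) by
            rw [Subgroup.coe_mul, mul_smul]) }
    have hval : ∀ (q : ↥Qg) (R : Ω), ((q • R : Ω) : Sylow p G) = (q : G) • (R : Sylow p G) :=
      fun _ _ => by with_unfolding_all rfl
    set q0 : Ω := ⟨Q, inf_le_right⟩ with hq0
    have hfix : MulAction.fixedPoints ↥Qg Ω = {q0} := by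
      ext R
      simp only [Set.mem_singleton_iff, MulAction.mem_fixedPoints]
      constructor
      · intro hR
        have hle : Qg ≤ Subgroup.normalizer ((R.1 : Subgroup G) : Set G) := by
          intro q hq
          have h2 : (q : G) • (R : Sylow p G) = R := by
            rw [← hval ⟨q, hq⟩ R, hR ⟨q, hq⟩]
          exact Sylow.smul_eq_iff_mem_normalizer.mp h2
        have hinf : Qg ⊓ Subgroup.normalizer ((R.1 : Subgroup G) : Set G) = Qg ⊓ (R.1 : Subgroup G) :=
          Q.2.inf_normalizer_sylow R.1
        have hQR : Qg ≤ (R.1 : Subgroup G) := by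
          rw [inf_eq_left.mpr hle] at hinf
          rw [hinf]; exact inf_le_right
        have heq : Qg = (R.1 : Subgroup G) :=
          Subgroup.eq_of_le_of_card_ge hQR (by rw [hcard R.1, hcard Q])
        exact Subtype.ext (Sylow.ext heq.symm)
      · rintro rfl q
        refine Subtype.ext ?_
        rw [hval q q0]
        exact Sylow.smul_eq_iff_mem_normalizer.mpr (Subgroup.le_normalizer q.2)
    have hfixcard : Nat.card (MulAction.fixedPoints ↥Qg Ω) = 1 := by rw [hfix]; simp
    have hcong := Q.2.card_modEq_card_fixedPoints Ω
    rw [hfixcard] at hcong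
    have hΩ2 : 2 ≤ Nat.card Ω := by
      rw [Nat.succ_le_iff, Finite.one_lt_card_iff_nontrivial]
      refine ⟨⟨⟨P, inf_le_left⟩, q0, fun h => hPQ ?_⟩⟩
      simpa [hq0] using congrArg Subtype.val h
    have hpdvd : p ∣ Nat.card Ω - 1 := (Nat.modEq_iff_dvd' (by omega)).mp hcong.symm
    have hΩp : p + 1 ≤ Nat.card Ω := by
      obtain ⟨c, hc⟩ := hpdvd
      rcases Nat.eq_zero_or_pos c with rfl | hcpos
      · omega
      · have : p ≤ p * c := Nat.le_mul_of_pos_right p hcpos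
        omega
    set s : Finset (Sylow p G) := Set.toFinset {R : Sylow p G | D ≤ (R : Subgroup G)} with hs
    have hsmem : ∀ R : Sylow p G, R ∈ s ↔ D ≤ (R : Subgroup G) := by
      intro R; rw [hs]; simp [Set.mem_toFinset]
    have hscard : p + 1 ≤ s.card := by
      rw [hs, Set.toFinset_card, ← Nat.card_eq_fintype_card]
      exact hΩp
    set DF : Finset G := Set.toFinset (D : Set G) with hDF
    have hDFcard : DF.card = p ^ d := by
      rw [hDF, Set.toFinset_card, ← Nat.card_eq_fintype_card]
      exact hd
    have hDFsub : ∀ R ∈ s, DF ⊆ A R := by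
      intro R hR x hx
      rw [hAmem]
      exact (hsmem R).mp hR (by simpa [hDF, Set.mem_toFinset] using hx)
    have hinterB : ∀ R ∈ s, ∀ S ∈ s, R ≠ S → A R ∩ A S ⊆ DF := by
      intro R hR S hS hRS x hx
      have hDle : D ≤ (R : Subgroup G) ⊓ (S : Subgroup G) :=
        le_inf ((hsmem R).mp hR) ((hsmem S).mp hS)
      have heq : D = (R : Subgroup G) ⊓ (S : Subgroup G) :=
        Subgroup.eq_of_le_of_card_ge hDle (hd ▸ hmax R S hRS)
      rw [Finset.mem_inter] at hx
      rw [hDF, Set.mem_toFinset]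
      show x ∈ D
      rw [heq]
      exact Subgroup.mem_inf.mpr ⟨(hAmem R x).mp hx.1, (hAmem S x).mp hx.2⟩
    have hsne : s.Nonempty := ⟨Q, (hsmem Q).mpr inf_le_right⟩
    have hbound := aux_unionD A DF s hsne hDFsub hinterB (p ^ n) (fun R _ => hAcard R)
    rw [hDFcard] at hbound
    have hUT : (s.biUnion A).card ≤ T.card := Finset.card_le_card (hsubT s)
    have hxp : p ^ d * p = p ^ n := by rw [hn, pow_succ]
    have key : (p + 1) * (p ^ d * p - p ^ d) + p ^ d = p ^ d * p * p := by
      have h1 : p ^ d ≤ p ^ d * p := Nat.le_mul_of_pos_right _ hp.pos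
      zify [h1]
      ring
    have hfin : p ^ (n + 1) ≤ s.card * (p ^ n - p ^ d) + p ^ d := by
      rw [← hxp]
      calc p ^ (n + 1) = p ^ d * p * p := by rw [hn]; ring
        _ = (p + 1) * (p ^ d * p - p ^ d) + p ^ d := key.symm
        _ ≤ s.card * (p ^ d * p - p ^ d) + p ^ d :=
            Nat.add_le_add_right (Nat.mul_le_mul_right _ hscard) _
    exact le_trans hfin (le_trans hbound hUT)
end

section
/- Let p be a prime and let G be a finite group whose Sylow p-subgroups are not normal in G. Then the set of p-elements of G cannot be covered by p Sylow p-subgroups of G; that is, for any Sylow p-subgroups P_1, ..., P_p of G, there is a p-element of G lying in none of them. In particular, if ν_p(G) = p + 1 then G does not have a redundant Sylow p-subgroup. -/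
open Finset Pointwise

theorem Subgroup.biUnion_ne_univ_of_card_le_index {G ι : Type*} [Group G] {H : ι → Subgroup G}
    {s : Finset ι} {n : ℕ} (hn : 2 ≤ n) (hs : #s ≤ n) (hH : ∀ i ∈ s, n ≤ (H i).index) :
    ⋃ i ∈ s, (H i : Set G) ≠ Set.univ := by
  classical
  intro hcover
  replace hcover : ⋃ i ∈ s, (1 : G) • (H i : Set G) = Set.univ := by simpa using hcover
  have hsum_le : ∑ i ∈ s, ((H i).index : ℚ)⁻¹ ≤ #s / n := by
    rw [div_eq_mul_inv, ← nsmul_eq_mul]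
    refine sum_le_card_nsmul _ _ _ fun i hi => inv_anti₀ (by positivity) ?_
    exact_mod_cast hH i hi
  have hone_le := Subgroup.one_le_sum_inv_index_of_leftCoset_cover hcover
  have hcard : #s = n := by
    have hn0 : (0 : ℚ) < n := by positivity
    have : (n : ℚ) ≤ #s := by rw [le_div_iff₀ hn0] at hsum_le; nlinarith
    exact le_antisymm hs (by exact_mod_cast this)
  have hdisj := Subgroup.pairwiseDisjoint_leftCoset_cover_of_sum_inv_index_eq_one hcover
    (le_antisymm (hsum_le.trans (by rw [hcard, div_self (by positivity)])) hone_le)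
  obtain ⟨i, hi, j, hj, hij⟩ := one_lt_card.mp (hcard ▸ hn)
  have hfin : ∀ k ∈ s, (H k).FiniteIndex := fun k hk => ⟨by have := hH k hk; omega⟩
  exact Set.disjoint_left.mp (hdisj (by simpa using ⟨hi, hfin i hi⟩)
    (by simpa using ⟨hj, hfin j hj⟩) hij) (show (1 : G) ∈ _ by simp) (by simp)

theorem IsPGroup.le_index_of_ne_top {p : ℕ} [Fact p.Prime] {K : Type*} [Group K] [Finite K]
    (hK : IsPGroup p K) {H : Subgroup K} (hH : H ≠ ⊤) : p ≤ H.index := by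
  obtain ⟨k, hk⟩ := hK.index H
  have hk0 : k ≠ 0 := by
    rintro rfl
    exact hH (Subgroup.index_eq_one.mp (by rwa [pow_zero] at hk))
  exact hk ▸ Nat.le_self_pow hk0 p

namespace Sylow

variable {p : ℕ} [Fact p.Prime] {G : Type*} [Group G] [Finite G]

theorem exists_mem_forall_notMem_of_card_le (P : Sylow p G) {s : Finset (Sylow p G)}
    (hP : P ∉ s) (hs : #s ≤ p) : ∃ x ∈ P, ∀ Q ∈ s, x ∉ Q := by
  have hproper : ∀ Q ∈ s, (Q : Subgroup G).subgroupOf P ≠ ⊤ := fun Q hQ htop =>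
    hP (Sylow.ext (P.3 Q.2 (Subgroup.subgroupOf_eq_top.mp htop)) ▸ hQ)
  obtain ⟨⟨x, hxP⟩, hx⟩ := Set.ne_univ_iff_exists_notMem _ |>.mp <|
    Subgroup.biUnion_ne_univ_of_card_le_index (Fact.out : p.Prime).two_le hs
      fun Q hQ => P.isPGroup'.le_index_of_ne_top (hproper Q hQ)
  simp only [Set.mem_iUnion, SetLike.mem_coe, Subgroup.mem_subgroupOf, not_exists] at hx
  exact ⟨x, hxP, hx⟩

theorem lt_card_of_not_normal (P : Sylow p G) (hP : ¬ (P : Subgroup G).Normal) :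
    p < Nat.card (Sylow p G) := by
  have hne : Nat.card (Sylow p G) ≠ 1 := fun h =>
    hP (haveI := (Nat.card_eq_one_iff_unique.mp h).1; normal_of_subsingleton P)
  have hpos : 0 < Nat.card (Sylow p G) := Nat.card_pos
  have hdvd : p ∣ Nat.card (Sylow p G) - 1 :=
    (Nat.modEq_iff_dvd' hpos).mp (card_sylow_modEq_one p G).symm
  have := Nat.le_of_dvd (by omega) hdvd
  omega

theorem exists_pElement_forall_notMem_of_card_le (hcard : p < Nat.card (Sylow p G))
    {s : Finset (Sylow p G)} (hs : #s ≤ p) :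
    ∃ x : G, (∃ k : ℕ, orderOf x = p ^ k) ∧ ∀ Q ∈ s, x ∉ Q := by
  have := Fintype.ofFinite (Sylow p G)
  obtain ⟨P, -, hP⟩ := exists_mem_notMem_of_card_lt_card (s := s) (t := univ)
    (by rw [card_univ, ← Nat.card_eq_fintype_card]; omega)
  obtain ⟨x, hxP, hx⟩ := P.exists_mem_forall_notMem_of_card_le hP hs
  obtain ⟨k, hk⟩ := IsPGroup.iff_orderOf.mp P.isPGroup' ⟨x, hxP⟩
  exact ⟨x, ⟨k, by rwa [← Subgroup.orderOf_mk]⟩, hx⟩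

end Sylow

/-- if the Sylow `p`-subgroups of a finite group `G` are not normal, then the
set of `p`-elements of `G` cannot be covered by `p` Sylow `p`-subgroups; in particular, if
`ν_p(G) = p + 1` then `G` has no redundant Sylow `p`-subgroup. -/
theorem pElements_not_covered_by_p_sylows
    (p : ℕ) [Fact p.Prime] (G : Type*) [Group G] [Finite G]
    (hnn : ∀ P : Sylow p G, ¬ (P : Subgroup G).Normal) :
    (∀ f : Fin p → Sylow p G, ∃ x : G, (∃ k : ℕ, orderOf x = p ^ k) ∧
      ∀ i : Fin p, x ∉ (f i : Subgroup G)) ∧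
    (Nat.card (Sylow p G) = p + 1 → ¬ HasRedundantSylow p G) := by
  classical
  have := Fintype.ofFinite (Sylow p G)
  have hcard : p < Nat.card (Sylow p G) := Sylow.lt_card_of_not_normal default (hnn default)
  refine ⟨fun f => ?_, fun hcard_eq ⟨P, hP⟩ => ?_⟩
  · obtain ⟨x, hx, hxf⟩ := Sylow.exists_pElement_forall_notMem_of_card_le hcard
      (s := univ.image f) (card_image_le.trans (by simp))
    exact ⟨x, hx, fun i => hxf (f i) (mem_image_of_mem f (mem_univ i))⟩
  · obtain ⟨x, hx, hxs⟩ := Sylow.exists_pElement_forall_notMem_of_card_le hcard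
      (s := univ.erase P) (by rw [card_erase_of_mem (mem_univ P), card_univ,
        ← Nat.card_eq_fintype_card, hcard_eq, Nat.add_sub_cancel])
    obtain ⟨Q, hQP, hxQ⟩ := hP x hx
    exact hxs Q (mem_erase.mpr ⟨hQP, mem_univ Q⟩) hxQ
end
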